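/- arXiv:1802.02723 — 6 statements merged into one kernel-verified Lean document; each statement's English description precedes it below -/
import Mathlib

section
/- For every λ ∈ ℂ, the limit g_{f_λ}(z) := lim_{n→∞} d^{−n}·(1/2)·log(1+|f_λ^n(z)|²) exists uniformly in z on ℂ, and sup_{z∈ℂ} |g_{f_λ}(z) − (1/2)·log(1+|z|²)| ≤ (1/(d−1))·sup_{z∈ℂ} |log([z,∞]^d / [f_λ(z),∞])|. -/
/- STATEMENT 1:
For every λ ∈ ℂ, the limit g_{f_λ}(z) := lim_{n→∞} d^{−n}·(1/2)·log(1+|f_λ^n(z)|²) exists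
uniformly in z on ℂ, and
sup_{z∈ℂ} |g_{f_λ}(z) − (1/2)·log(1+|z|²)|
  ≤ (1/(d−1))·sup_{z∈ℂ} |log([z,∞]^d / [f_λ(z),∞])|.
Context: d > 1, f_λ(z) := z^d + λ, [z,∞] := 1/√(1+|z|²). -/

noncomputable def fc (d : ℕ) (lam z : ℂ) : ℂ := z ^ d + lam

noncomputable def chordInf (z : ℂ) : ℝ := 1 / Real.sqrt (1 + ‖z‖ ^ 2)

namespace St1

noncomputable def hfun (d : ℕ) (lam w : ℂ) : ℝ :=
  (1/2) * Real.log (1 + ‖fc d lam w‖ ^ 2) - (d:ℝ) * ((1/2) * Real.log (1 + ‖w‖ ^ 2))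

lemma aux1 (a L y : ℝ) (ha : 0 ≤ a) (hL : 0 ≤ L) (hy : 0 ≤ y) (h : y ≤ a + L) :
    1 + y^2 ≤ 2*(1+L)^2*(1+a^2) := by
  nlinarith [sq_nonneg (a - 1), sq_nonneg (a*L - 1), sq_nonneg (a - L)]

lemma ratio_upper (d : ℕ) (hd : 1 ≤ d) (lam w : ℂ) :
    1 + ‖fc d lam w‖ ^ 2 ≤ (2^d * 2 * (1+‖lam‖)^2) * (1 + ‖w‖^2)^d := by
  set x := ‖w‖ with hx
  have hx0 : 0 ≤ x := norm_nonneg _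
  have hL0 : 0 ≤ ‖lam‖ := norm_nonneg _
  have hy : ‖fc d lam w‖ ≤ x^d + ‖lam‖ := by
    calc ‖fc d lam w‖ ≤ ‖w^d‖ + ‖lam‖ := norm_add_le _ _
    _ = x^d + ‖lam‖ := by rw [norm_pow]
  have h1 : 1 + ‖fc d lam w‖^2 ≤ 2*(1+‖lam‖)^2*(1+(x^d)^2) :=
    aux1 _ _ _ (pow_nonneg hx0 d) hL0 (norm_nonneg _) hy
  have h2 : (x^d)^2 = (x^2)^d := by rw [← pow_mul, ← pow_mul, mul_comm]
  have h3 : 1 + (x^2)^d ≤ (1+x^2)^d := by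
    calc 1 + (x^2)^d = 1^d + (x^2)^d := by rw [one_pow]
    _ ≤ (1+x^2)^d := pow_add_pow_le zero_le_one (sq_nonneg x) (by omega)
  have h4 : (1:ℝ) ≤ 2^d := one_le_pow₀ one_le_two
  have h5 : (0:ℝ) ≤ 2*(1+‖lam‖)^2 := by positivity
  calc 1 + ‖fc d lam w‖^2 ≤ 2*(1+‖lam‖)^2*(1+(x^2)^d) := by rw [← h2]; exact h1
  _ ≤ 2*(1+‖lam‖)^2*(1+x^2)^d := by
      apply mul_le_mul_of_nonneg_left _ h5
      exact h3
  _ ≤ (2^d * 2 * (1+‖lam‖)^2) * (1+x^2)^d := by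
      apply mul_le_mul_of_nonneg_right _ (by positivity)
      nlinarith [sq_nonneg (1+‖lam‖)]

lemma ratio_lower (d : ℕ) (hd : 1 ≤ d) (lam w : ℂ) :
    (1 + ‖w‖^2)^d ≤ (2^d * 2 * (1+‖lam‖)^2) * (1 + ‖fc d lam w‖^2) := by
  set x := ‖w‖ with hx
  set y := ‖fc d lam w‖ with hyd
  have hx0 : 0 ≤ x := norm_nonneg _
  have hL0 : 0 ≤ ‖lam‖ := norm_nonneg _
  have hy0 : 0 ≤ y := norm_nonneg _
  have hxy : x^d ≤ y + ‖lam‖ := by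
    calc x^d = ‖w^d‖ := (norm_pow w d).symm
    _ = ‖fc d lam w - lam‖ := by rw [fc]; ring_nf
    _ ≤ y + ‖lam‖ := norm_sub_le _ _
  have h1 : 1 + (x^d)^2 ≤ 2*(1+‖lam‖)^2*(1+y^2) :=
    aux1 _ _ _ hy0 hL0 (pow_nonneg hx0 d) hxy
  have h2 : (1+x^2)^d ≤ 2^d * (1+(x^d)^2) := by
    have h2' : (x^d)^2 = (x^2)^d := by rw [← pow_mul, ← pow_mul, mul_comm]
    rw [h2']
    rcases le_total (x^2) 1 with h | h
    · calc (1+x^2)^d ≤ 2^d := by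
            apply pow_le_pow_left₀ (by positivity) (by linarith)
      _ ≤ 2^d * (1+(x^2)^d) := by
            nlinarith [pow_nonneg (sq_nonneg x) d, pow_pos (zero_lt_two (α := ℝ)) d]
    · calc (1+x^2)^d ≤ (2*x^2)^d := by
            apply pow_le_pow_left₀ (by positivity) (by linarith)
      _ = 2^d * (x^2)^d := mul_pow 2 (x^2) d
      _ ≤ 2^d * (1+(x^2)^d) := by
            nlinarith [pow_nonneg (sq_nonneg x) d, pow_pos (zero_lt_two (α := ℝ)) d]
  calc (1+x^2)^d ≤ 2^d * (1+(x^d)^2) := h2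
  _ ≤ 2^d * (2*(1+‖lam‖)^2*(1+y^2)) := by
      apply mul_le_mul_of_nonneg_left h1 (by positivity)
  _ = (2^d * 2 * (1+‖lam‖)^2) * (1+y^2) := by ring

lemma log_chordInf (z : ℂ) : Real.log (chordInf z) = -((1/2) * Real.log (1 + ‖z‖^2)) := by
  rw [chordInf, one_div, Real.log_inv, Real.log_sqrt (by positivity)]
  ring

lemma chordInf_pos (z : ℂ) : 0 < chordInf z := by
  rw [chordInf]
  positivity

lemma chord_eq (d : ℕ) (lam w : ℂ) :
    Real.log (chordInf w ^ d / chordInf (fc d lam w)) = hfun d lam w := by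
  rw [Real.log_div (pow_pos (chordInf_pos w) d).ne' (chordInf_pos _).ne', Real.log_pow,
    log_chordInf, log_chordInf, hfun]
  ring

lemma hfun_bound (d : ℕ) (hd : 1 ≤ d) (lam : ℂ) (w : ℂ) :
    |hfun d lam w| ≤ (1/2) * Real.log (2^d * 2 * (1+‖lam‖)^2) := by
  have hub := ratio_upper d hd lam w
  have hlb := ratio_lower d hd lam w
  set B : ℝ := 2^d * 2 * (1+‖lam‖)^2 with hB
  have hB1 : (1:ℝ) ≤ B := by
    have : (1:ℝ) ≤ 2^d := one_le_pow₀ one_le_two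
    nlinarith [sq_nonneg (‖lam‖), norm_nonneg lam]
  have hA1 : (1:ℝ) ≤ 1 + ‖fc d lam w‖^2 := le_add_of_nonneg_right (sq_nonneg _)
  have hP1 : (1:ℝ) ≤ (1 + ‖w‖^2)^d := one_le_pow₀ (le_add_of_nonneg_right (sq_nonneg _))
  have l1 : Real.log (1 + ‖fc d lam w‖^2) ≤ Real.log B + Real.log ((1+‖w‖^2)^d) := by
    rw [← Real.log_mul (by positivity) (by positivity)]
    exact Real.log_le_log (by positivity) hub
  have l2 : Real.log ((1+‖w‖^2)^d) ≤ Real.log B + Real.log (1 + ‖fc d lam w‖^2) := by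
    rw [← Real.log_mul (by positivity) (by positivity)]
    exact Real.log_le_log (by positivity) hlb
  have e : (d:ℝ) * ((1/2) * Real.log (1 + ‖w‖^2)) = (1/2) * Real.log ((1+‖w‖^2)^d) := by
    rw [Real.log_pow]; ring
  rw [hfun, e, abs_le]
  constructor <;> nlinarith [l1, l2]

lemma tele (d : ℕ) (hd : 1 ≤ d) (lam : ℂ) (z : ℂ) (N : ℕ) :
    (1/2) * Real.log (1 + ‖(fc d lam)^[N] z‖ ^ 2) / (d:ℝ)^N
      = (1/2) * Real.log (1 + ‖z‖^2)
        + ∑ n ∈ Finset.range N, hfun d lam ((fc d lam)^[n] z) / (d:ℝ)^(n+1) := by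
  have hd0 : (0:ℝ) < (d:ℝ) := by exact_mod_cast Nat.lt_of_lt_of_le Nat.zero_lt_one hd
  induction N with
  | zero => simp
  | succ N ih =>
    rw [Finset.sum_range_succ, ← add_assoc, ← ih, Function.iterate_succ_apply']
    set w := (fc d lam)^[N] z
    rw [hfun, pow_succ]
    have h1 : ((d:ℝ)^N) ≠ 0 := by positivity
    field_simp
    ring

end St1

theorem statement1 (d : ℕ) (hd : 1 < d) (lam : ℂ) :
    ∃ g : ℂ → ℝ,
      TendstoUniformly
        (fun (n : ℕ) (z : ℂ) =>
          (1 / 2) * Real.log (1 + ‖(fc d lam)^[n] z‖ ^ 2) / (d : ℝ) ^ n)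
        g Filter.atTop ∧
      ∀ z : ℂ, |g z - (1 / 2) * Real.log (1 + ‖z‖ ^ 2)| ≤
        (1 / ((d : ℝ) - 1)) *
          ⨆ w : ℂ, |Real.log (chordInf w ^ d / chordInf (fc d lam w))| := by
  have hd1 : 1 ≤ d := hd.le
  have hdR : (1:ℝ) < (d:ℝ) := by exact_mod_cast hd
  have hd0 : (0:ℝ) < (d:ℝ) := by linarith
  -- the supremum C₀
  set φ : ℂ → ℝ := fun w => |Real.log (chordInf w ^ d / chordInf (fc d lam w))| with hφ
  have hφeq : ∀ w, φ w = |St1.hfun d lam w| := fun w => by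
    simp only [hφ, St1.chord_eq]
  have hbdd : BddAbove (Set.range φ) := by
    refine ⟨(1/2) * Real.log (2^d * 2 * (1+‖lam‖)^2), ?_⟩
    rintro _ ⟨w, rfl⟩
    rw [hφeq]
    exact St1.hfun_bound d hd1 lam w
  set C₀ : ℝ := ⨆ w : ℂ, φ w with hC₀
  have hC₀b : ∀ w, |St1.hfun d lam w| ≤ C₀ := fun w => by
    rw [← hφeq]; exact le_ciSup hbdd w
  have hC₀0 : 0 ≤ C₀ := le_trans (abs_nonneg _) (hC₀b 0)
  -- the series
  set F : ℕ → ℂ → ℝ := fun n z => St1.hfun d lam ((fc d lam)^[n] z) / (d:ℝ)^(n+1) with hF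
  set u : ℕ → ℝ := fun n => C₀ * (1/(d:ℝ))^(n+1) with hu
  have hrpos : (0:ℝ) ≤ 1/(d:ℝ) := by positivity
  have hrlt : 1/(d:ℝ) < 1 := by rw [div_lt_one hd0]; exact hdR
  have hsum_u : Summable u := by
    have : Summable (fun n : ℕ => (C₀ * (1/(d:ℝ))) * (1/(d:ℝ))^n) :=
      (summable_geometric_of_lt_one hrpos hrlt).mul_left _
    exact this.congr (fun n => by rw [hu]; ring)
  have hFu : ∀ (n : ℕ) (z : ℂ), ‖F n z‖ ≤ u n := by
    intro n z
    have hp : (0:ℝ) < (d:ℝ)^(n+1) := by positivity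
    simp only [hF, hu, Real.norm_eq_abs, abs_div, abs_of_pos hp, div_pow, one_pow, mul_one_div]
    gcongr
    exact hC₀b _
  have hT := tendstoUniformly_tsum_nat hsum_u hFu
  refine ⟨fun z => (1/2) * Real.log (1 + ‖z‖^2) + ∑' n, F n z, ?_, ?_⟩
  · have h2 : (fun (n : ℕ) (z : ℂ) =>
        (1 / 2) * Real.log (1 + ‖(fc d lam)^[n] z‖ ^ 2) / (d : ℝ) ^ n)
        = fun (N : ℕ) (z : ℂ) =>
          (1/2) * Real.log (1 + ‖z‖^2) + ∑ n ∈ Finset.range N, F n z := by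
      funext N z
      exact St1.tele d hd1 lam z N
    rw [h2]
    have hconst : TendstoUniformly (fun (_ : ℕ) (z : ℂ) => (1/2) * Real.log (1 + ‖z‖^2))
        (fun z => (1/2) * Real.log (1 + ‖z‖^2)) Filter.atTop := by
      intro s hs
      filter_upwards with n x using refl_mem_uniformity hs
    exact hconst.add hT
  · intro z
    have hsz : Summable (fun n => ‖F n z‖) :=
      Summable.of_nonneg_of_le (fun n => norm_nonneg _) (fun n => hFu n z) hsum_u
    have h1 : |∑' n, F n z| ≤ ∑' n, ‖F n z‖ := norm_tsum_le_tsum_norm hsz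
    have h2 : ∑' n, ‖F n z‖ ≤ ∑' n, u n := Summable.tsum_le_tsum (fun n => hFu n z) hsz hsum_u
    have h3 : ∑' n, u n = (1 / ((d:ℝ) - 1)) * C₀ := by
      have e1 : ∑' n, u n = (C₀ * (1/(d:ℝ))) * (1 - 1/(d:ℝ))⁻¹ := by
        rw [show u = fun n : ℕ => (C₀ * (1/(d:ℝ))) * (1/(d:ℝ))^n from funext fun n => by
          rw [hu]; ring, tsum_mul_left, tsum_geometric_of_lt_one hrpos hrlt]
      rw [e1]
      have hne : (d:ℝ) - 1 ≠ 0 := by linarith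
      field_simp
    have h4 : (1/2) * Real.log (1 + ‖z‖^2) + (∑' n, F n z) - (1/2) * Real.log (1 + ‖z‖^2)
        = ∑' n, F n z := by ring
    calc |(fun z => (1/2) * Real.log (1 + ‖z‖^2) + ∑' n, F n z) z
          - (1 / 2) * Real.log (1 + ‖z‖ ^ 2)| = |∑' n, F n z| := by
            rw [show (fun z => (1/2) * Real.log (1 + ‖z‖^2) + ∑' n, F n z) z
              = (1/2) * Real.log (1 + ‖z‖^2) + ∑' n, F n z from rfl, h4]
    _ ≤ (1 / ((d:ℝ) - 1)) * C₀ := by rw [← h3]; exact le_trans h1 h2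
end

section
/- The function λ ↦ sup_{z∈ℂ} |log([z,∞]^d / [f_λ(z),∞])| takes finite values and is locally bounded on ℂ, i.e., it is bounded on every compact subset of ℂ. -/
lemma chordInf_pos (z : ℂ) : 0 < chordInf z := by
  unfold chordInf; positivity

lemma chordInf_sq (z : ℂ) : chordInf z ^ 2 = 1 / (1 + ‖z‖ ^ 2) := by
  unfold chordInf
  rw [div_pow, one_pow, Real.sq_sqrt (by positivity)]

set_option maxHeartbeats 1000000 in
lemma key_bound (d : ℕ) (hd : 1 ≤ d) (lam z : ℂ) :
    |Real.log (chordInf z ^ d / chordInf (fc d lam z))| ≤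
      Real.log (2 ^ (d + 1) * (1 + ‖lam‖ ^ 2)) := by
  set t := ‖z‖ with ht
  set a := ‖lam‖ with ha
  set F := ‖fc d lam z‖ with hFdef
  have ht0 : 0 ≤ t := norm_nonneg _
  have ha0 : 0 ≤ a := norm_nonneg _
  have hF0 : 0 ≤ F := norm_nonneg _
  set C : ℝ := 2 ^ (d + 1) * (1 + a ^ 2) with hC
  have h4 : (4:ℝ) ≤ 2 ^ (d + 1) := by
    calc (4:ℝ) = 2 ^ 2 := by norm_num
    _ ≤ 2 ^ (d + 1) := by
        apply pow_le_pow_right₀ (by norm_num) (by omega)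
  have h4C : 4 * (1 + a ^ 2) ≤ C := by
    have h0 : (0:ℝ) ≤ 1 + a ^ 2 := by positivity
    exact mul_le_mul_of_nonneg_right h4 h0
  have hC1 : (1:ℝ) ≤ C := by nlinarith [sq_nonneg a]
  have hC0 : (0:ℝ) < C := by linarith
  set P : ℝ := (1 + t ^ 2) ^ d with hP
  have hP0 : (0:ℝ) < P := by positivity
  have hP1 : (1:ℝ) ≤ P := by
    calc (1:ℝ) = 1 ^ d := (one_pow d).symm
    _ ≤ (1 + t ^ 2) ^ d := pow_le_pow_left₀ (by norm_num) (by nlinarith) d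
  -- norm comparisons
  have htF : t ^ d ≤ F + a := by
    have hzd : z ^ d = fc d lam z - lam := by simp [fc]
    calc t ^ d = ‖z ^ d‖ := (norm_pow z d).symm
    _ = ‖fc d lam z - lam‖ := by rw [hzd]
    _ ≤ F + a := norm_sub_le _ _
  have hFt : F ≤ t ^ d + a := by
    calc F = ‖z ^ d + lam‖ := rfl
    _ ≤ ‖z ^ d‖ + a := norm_add_le _ _
    _ = t ^ d + a := by rw [norm_pow]
  have hPt : (t ^ d) ^ 2 ≤ P := by
    calc (t ^ d) ^ 2 = (t ^ 2) ^ d := by rw [← pow_mul, ← pow_mul, Nat.mul_comm]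
    _ ≤ (1 + t ^ 2) ^ d := pow_le_pow_left₀ (by positivity) (by linarith) d
  -- upper bound: 1 + F² ≤ C * P
  have hupper : 1 + F ^ 2 ≤ C * P := by
    have h1 : 1 + F ^ 2 ≤ 4 * (1 + a ^ 2) * P := by
      nlinarith [sq_nonneg (t ^ d - a), mul_nonneg (by positivity : (0:ℝ) ≤ 2 + 4 * a ^ 2) (by linarith : (0:ℝ) ≤ P - 1)]
    calc 1 + F ^ 2 ≤ 4 * (1 + a ^ 2) * P := h1
    _ ≤ C * P := mul_le_mul_of_nonneg_right h4C hP0.le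
  -- lower bound: P ≤ C * (1 + F²)
  have hlower : P ≤ C * (1 + F ^ 2) := by
    have hPle : P ≤ 2 ^ d * (1 + (t ^ d) ^ 2) := by
      have h2dpos : (0:ℝ) < 2 ^ d := pow_pos (by norm_num) d
      rcases le_total t 1 with h | h
      · have h1 : P ≤ 2 ^ d := pow_le_pow_left₀ (by positivity) (by nlinarith) d
        nlinarith [sq_nonneg (t ^ d)]
      · have h2 : 1 + t ^ 2 ≤ 2 * t ^ 2 := by nlinarith
        have h3 : P ≤ (2 * t ^ 2) ^ d := pow_le_pow_left₀ (by positivity) h2 d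
        have heq : (2 * t ^ 2) ^ d = 2 ^ d * (t ^ d) ^ 2 := by
          rw [mul_pow, ← pow_mul, ← pow_mul, Nat.mul_comm d 2]
        nlinarith
    have htd2 : (t ^ d) ^ 2 ≤ 2 * F ^ 2 + 2 * a ^ 2 := by
      nlinarith [sq_nonneg (F - a)]
    have h2d : 2 ^ d * (1 + (t ^ d) ^ 2) ≤ 2 ^ d * (2 * (1 + a ^ 2) * (1 + F ^ 2)) := by
      apply mul_le_mul_of_nonneg_left _ (by positivity)
      nlinarith [mul_nonneg (sq_nonneg a) (sq_nonneg F)]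
    calc P ≤ 2 ^ d * (1 + (t ^ d) ^ 2) := hPle
    _ ≤ 2 ^ d * (2 * (1 + a ^ 2) * (1 + F ^ 2)) := h2d
    _ = C * (1 + F ^ 2) := by rw [hC, pow_succ]; ring
  -- the ratio and its square
  set q : ℝ := chordInf z ^ d / chordInf (fc d lam z) with hq
  have hq0 : 0 < q := div_pos (pow_pos (chordInf_pos z) d) (chordInf_pos _)
  have hq2 : q ^ 2 = (1 + F ^ 2) / P := by
    rw [hq, div_pow, ← pow_mul, Nat.mul_comm d 2, pow_mul, chordInf_sq, chordInf_sq,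
      div_pow, one_pow, ← ht, ← hFdef, hP]
    have hden : (0:ℝ) < (1 + t ^ 2) ^ d := by positivity
    have hF2 : (0:ℝ) < 1 + F ^ 2 := by positivity
    field_simp
  have hR0 : (0:ℝ) < (1 + F ^ 2) / P := by positivity
  have hup : (1 + F ^ 2) / P ≤ C := (div_le_iff₀ hP0).mpr (by linarith [hupper])
  have hlo : 1 / C ≤ (1 + F ^ 2) / P := by
    rw [div_le_div_iff₀ hC0 hP0]
    linarith [hlower]
  have hlogC0 : 0 ≤ Real.log C := Real.log_nonneg hC1
  have hlog_up : Real.log ((1 + F ^ 2) / P) ≤ Real.log C := Real.log_le_log hR0 hup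
  have hlog_lo : -Real.log C ≤ Real.log ((1 + F ^ 2) / P) := by
    have := Real.log_le_log (by positivity) hlo
    rwa [one_div, Real.log_inv] at this
  have habs : |Real.log ((1 + F ^ 2) / P)| ≤ Real.log C := abs_le.mpr ⟨hlog_lo, hlog_up⟩
  have hlogq : (2:ℝ) * Real.log q = Real.log ((1 + F ^ 2) / P) := by
    rw [← hq2, Real.log_pow]; norm_num
  have : 2 * |Real.log q| ≤ Real.log C := by
    calc 2 * |Real.log q| = |2 * Real.log q| := by rw [abs_mul]; norm_num
    _ = |Real.log ((1 + F ^ 2) / P)| := by rw [hlogq]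
    _ ≤ Real.log C := habs
  calc |Real.log q| ≤ Real.log C / 2 := by linarith [abs_nonneg (Real.log q)]
  _ ≤ Real.log C := by linarith

theorem statement2 (d : ℕ) (hd : 1 < d) :
    (∀ lam : ℂ, BddAbove (Set.range fun z : ℂ =>
        |Real.log (chordInf z ^ d / chordInf (fc d lam z))|)) ∧
    ∀ K : Set ℂ, IsCompact K → ∃ M : ℝ, ∀ lam ∈ K,
      (⨆ z : ℂ, |Real.log (chordInf z ^ d / chordInf (fc d lam z))|) ≤ M := by
  have hd1 : 1 ≤ d := hd.le
  constructor
  · intro lam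
    refine ⟨Real.log (2 ^ (d + 1) * (1 + ‖lam‖ ^ 2)), ?_⟩
    rintro x ⟨z, rfl⟩
    exact key_bound d hd1 lam z
  · intro K hK
    obtain ⟨r, hr⟩ := hK.isBounded.subset_closedBall 0
    refine ⟨Real.log (2 ^ (d + 1) * (1 + (max r 0) ^ 2)), fun lam hlam => ?_⟩
    have hnorm : ‖lam‖ ≤ max r 0 := by
      have := hr hlam
      rw [Metric.mem_closedBall, dist_zero_right] at this
      exact this.trans (le_max_left _ _)
    apply ciSup_le
    intro z
    refine (key_bound d hd1 lam z).trans ?_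
    apply Real.log_le_log (by positivity)
    have : ‖lam‖ ^ 2 ≤ (max r 0) ^ 2 :=
      pow_le_pow_left₀ (norm_nonneg _) hnorm 2
    nlinarith [pow_pos (show (0:ℝ) < 2 by norm_num) (d + 1)]
end

section
/- For every integer n ≥ 1 and every λ ∈ ℂ, set L := sup_{z∈ℂ} (f_λ^{n−1})^#(z) and ε := (4L)^{−1/(d−1)}. Then the diameter, in the chordal metric, of the image f_λ^n({z ∈ ℂ : |z| < ε}) is at most ε/2. -/
noncomputable def chord (z w : ℂ) : ℝ :=
  ‖z - w‖ / (Real.sqrt (1 + ‖z‖ ^ 2) * Real.sqrt (1 + ‖w‖ ^ 2))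

noncomputable def csharp (h : ℂ → ℂ) (z : ℂ) : ℝ :=
  ‖deriv h z‖ * (1 + ‖z‖ ^ 2) / (1 + ‖h z‖ ^ 2)

namespace S3


lemma spos (z : ℂ) : (0:ℝ) < 1 + ‖z‖^2 := by positivity

lemma normsq (z : ℂ) : ‖z‖^2 = z.re^2 + z.im^2 := by
  rw [Complex.sq_norm, Complex.normSq_apply]; ring

lemma fc_diff (d : ℕ) (lam : ℂ) : Differentiable ℂ (fc d lam) := by
  unfold fc; exact (differentiable_pow d).add_const lam

lemma deriv_fc (d : ℕ) (lam z : ℂ) : deriv (fc d lam) z = d * z ^ (d-1) := by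
  unfold fc
  rw [deriv_add_const]
  simp [deriv_pow]

lemma iter_diff (d : ℕ) (lam : ℂ) (k : ℕ) : Differentiable ℂ ((fc d lam)^[k]) := by
  induction k with
  | zero => simpa using differentiable_id
  | succ k ih =>
    rw [Function.iterate_succ]
    exact ih.comp (fc_diff d lam)

lemma csharp_nonneg (h : ℂ → ℂ) (z : ℂ) : 0 ≤ csharp h z := by
  unfold csharp; positivity

lemma csharp_comp (g f : ℂ → ℂ) (hg : Differentiable ℂ g) (hf : Differentiable ℂ f) (z : ℂ) :
    csharp (g ∘ f) z = csharp g (f z) * csharp f z := by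
  unfold csharp
  rw [deriv_comp z (hg _) (hf _)]
  simp only [Function.comp_apply, norm_mul]
  have h1 := spos (f z)
  have h2 := spos (g (f z))
  field_simp

lemma core (d : ℕ) (hd : 1 < d) (r A N : ℝ) (hr0 : 0 ≤ r) (hA0 : 0 ≤ A) (hN0 : 0 ≤ N)
    (hN : r^d - A ≤ N) : r^(d-1) * (1 + r^2) ≤ 8 * (1+A)^2 * (1+N^2) := by
  have hone : (1:ℝ) ≤ (1+A)^2 * (1+N^2) := by nlinarith [sq_nonneg (A*N), mul_nonneg hA0 (sq_nonneg N), sq_nonneg N, sq_nonneg A]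
  rcases le_or_gt r 1 with hr1 | hr1
  · have h1 : r^(d-1) ≤ 1 := pow_le_one₀ hr0 hr1
    have h2 : r^2 ≤ 1 := pow_le_one₀ hr0 hr1
    have h3 : r^(d-1)*(1+r^2) ≤ 2 := by nlinarith [pow_nonneg hr0 (d-1)]
    nlinarith
  · have h1 : (1:ℝ) ≤ r := hr1.le
    have hpow : r^(d-1) * (1 + r^2) ≤ 2 * (r^d)^2 := by
      have e0 : r^(d-1) * r^2 = r^(d+1) := by rw [← pow_add]; congr 1; omega
      have e1 : r^(d-1) * (1 + r^2) ≤ 2 * r^(d+1) := by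
        nlinarith [pow_le_pow_right₀ h1 (by omega : d - 1 ≤ d + 1), pow_nonneg hr0 (d-1),
          one_le_pow₀ (n := d+1) h1]
      have e2 : r^(d+1) ≤ (r^d)^2 := by
        rw [← pow_mul]; exact pow_le_pow_right₀ h1 (by omega)
      linarith
    set u := r^d with hu
    have hu1 : (1:ℝ) ≤ u := one_le_pow₀ h1
    rcases le_or_gt u (2 + 2*A) with h2 | h2
    · have : 2*u^2 ≤ 8*(1+A)^2 := by nlinarith
      nlinarith [mul_nonneg (sq_nonneg (1+A)) (sq_nonneg N)]
    · have hNu : u/2 ≤ N := by nlinarith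
      have hN2 : u^2/4 ≤ N^2 := by nlinarith
      nlinarith [sq_nonneg A, mul_nonneg hA0 (sq_nonneg N), mul_nonneg (mul_nonneg hA0 hA0) (sq_nonneg N), sq_nonneg N]

lemma csharp_fc_le (d : ℕ) (hd : 1 < d) (lam z : ℂ) :
    csharp (fc d lam) z ≤ 8 * d * (1 + ‖lam‖)^2 := by
  unfold csharp
  rw [deriv_fc, div_le_iff₀ (spos _)]
  have hnorm : ‖(d:ℂ) * z ^ (d-1)‖ = (d:ℝ) * ‖z‖^(d-1) := by
    rw [norm_mul, norm_pow, Complex.norm_natCast]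
  rw [hnorm]
  have hN : ‖z‖^d - ‖lam‖ ≤ ‖fc d lam z‖ := by
    have h := norm_sub_le (z^d + lam) lam
    simp only [add_sub_cancel_right] at h
    rw [norm_pow] at h
    simp only [fc]
    linarith
  have hcore := core d hd ‖z‖ ‖lam‖ ‖fc d lam z‖ (norm_nonneg _) (norm_nonneg _) (norm_nonneg _) hN
  have hD : (0:ℝ) ≤ d := Nat.cast_nonneg d
  calc (d:ℝ) * ‖z‖^(d-1) * (1 + ‖z‖^2) = (d:ℝ) * (‖z‖^(d-1) * (1 + ‖z‖^2)) := by ring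
    _ ≤ (d:ℝ) * (8 * (1+‖lam‖)^2 * (1+‖fc d lam z‖^2)) := by
        exact mul_le_mul_of_nonneg_left hcore hD
    _ = 8 * d * (1+‖lam‖)^2 * (1 + ‖fc d lam z‖^2) := by ring
lemma csharp_id (z : ℂ) : csharp id z = 1 := by
  unfold csharp
  rw [deriv_id]
  simp [ne_of_gt (spos z)]

lemma csharp_iter_le (d : ℕ) (hd : 1 < d) (lam : ℂ) (k : ℕ) (z : ℂ) :
    csharp ((fc d lam)^[k]) z ≤ (8 * d * (1 + ‖lam‖)^2)^k := by
  induction k generalizing z with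
  | zero => simp [Function.iterate_zero, csharp_id]
  | succ k ih =>
    rw [Function.iterate_succ, csharp_comp _ _ (iter_diff d lam k) (fc_diff d lam) z]
    have hC : (0:ℝ) ≤ 8 * d * (1 + ‖lam‖)^2 := by positivity
    calc csharp ((fc d lam)^[k]) (fc d lam z) * csharp (fc d lam) z
        ≤ (8 * d * (1 + ‖lam‖)^2)^k * (8 * d * (1 + ‖lam‖)^2) := by
          exact mul_le_mul (ih _) (csharp_fc_le d hd lam z) (csharp_nonneg _ _) (by positivity)
      _ = (8 * d * (1 + ‖lam‖)^2)^(k+1) := by ring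
    
lemma bdd (d : ℕ) (hd : 1 < d) (lam : ℂ) (k : ℕ) :
    BddAbove (Set.range (csharp ((fc d lam)^[k]))) := by
  refine ⟨(8 * d * (1 + ‖lam‖)^2)^k, ?_⟩
  rintro x ⟨z, rfl⟩
  exact csharp_iter_le d hd lam k z

-- invariance of the far region
lemma far_step (d : ℕ) (hd : 1 < d) (lam : ℂ) (w : ℂ) (hw : 2 + ‖lam‖ ≤ ‖w‖) :
    2 + ‖lam‖ ≤ ‖fc d lam w‖ := by
  have hA : (0:ℝ) ≤ ‖lam‖ := norm_nonneg _
  have h2 : (2:ℝ) ≤ ‖w‖ := by linarith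
  have h1 : (1:ℝ) ≤ ‖w‖ := by linarith
  have hp : 2 * ‖w‖ ≤ ‖w‖^d := by
    have : ‖w‖^1 ≤ ‖w‖^(d-1) := pow_le_pow_right₀ h1 (by omega)
    have e : ‖w‖^(d-1) * ‖w‖ = ‖w‖^d := by rw [← pow_succ]; congr 1; omega
    nlinarith
  have hN : ‖w‖^d - ‖lam‖ ≤ ‖fc d lam w‖ := by
    have h := norm_sub_le (w^d + lam) lam
    simp only [add_sub_cancel_right] at h
    rw [norm_pow] at h
    simp only [fc]; linarith
  linarith

lemma far_orbit (d : ℕ) (hd : 1 < d) (lam : ℂ) (k : ℕ) (w : ℂ) (hw : 2 + ‖lam‖ ≤ ‖w‖) :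
    2 + ‖lam‖ ≤ ‖(fc d lam)^[k] w‖ := by
  induction k generalizing w with
  | zero => simpa using hw
  | succ k ih =>
    rw [Function.iterate_succ_apply]
    exact ih _ (far_step d hd lam w hw)

lemma deriv_iter_ne (d : ℕ) (hd : 1 < d) (lam : ℂ) (k : ℕ) (w : ℂ) (hw : 2 + ‖lam‖ ≤ ‖w‖) :
    deriv ((fc d lam)^[k]) w ≠ 0 := by
  induction k generalizing w with
  | zero => simp
  | succ k ih =>
    rw [Function.iterate_succ, deriv_comp w ((iter_diff d lam k) _) ((fc_diff d lam) _)]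
    apply mul_ne_zero
    · exact ih _ (far_step d hd lam w hw)
    · rw [deriv_fc]
      have hw0 : w ≠ 0 := by
        intro h; rw [h, norm_zero] at hw
        nlinarith [norm_nonneg lam]
      exact mul_ne_zero (by exact_mod_cast (by omega : d ≠ 0)) (pow_ne_zero _ hw0)

lemma csharp_iter_pos (d : ℕ) (hd : 1 < d) (lam : ℂ) (k : ℕ) :
    ∃ z : ℂ, 0 < csharp ((fc d lam)^[k]) z := by
  set w : ℂ := ((2 + ‖lam‖ : ℝ) : ℂ)
  have hw : 2 + ‖lam‖ ≤ ‖w‖ := by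
    simp only [w, Complex.norm_real]
    rw [Real.norm_eq_abs, abs_of_nonneg (by positivity)]
  refine ⟨w, ?_⟩
  unfold csharp
  have h1 : 0 < ‖deriv ((fc d lam)^[k]) w‖ :=
    norm_pos_iff.mpr (deriv_iter_ne d hd lam k w hw)
  have h2 := spos w
  have h3 := spos ((fc d lam)^[k] w)
  positivity
lemma cs3 (p1 p2 p3 u1 u2 u3 : ℝ) :
    |p1*u1 + p2*u2 + p3*u3| ≤ Real.sqrt (p1^2+p2^2+p3^2) * Real.sqrt (u1^2+u2^2+u3^2) := by
  rw [← Real.sqrt_mul (by positivity), ← Real.sqrt_sq_eq_abs]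
  apply Real.sqrt_le_sqrt
  nlinarith [sq_nonneg (p1*u2-p2*u1), sq_nonneg (p1*u3-p3*u1), sq_nonneg (p2*u3-p3*u2)]

lemma deriv_norm_id (hre him vre vim q r : ℝ) (hq : q = hre^2+him^2)
    (hr : r = 2*(hre*vre+him*vim)) :
    (-(2*r)/(1+q)^2*hre + 2/(1+q)*vre)^2 + (-(2*r)/(1+q)^2*him + 2/(1+q)*vim)^2
      + (-(-(2*r)/(1+q)^2))^2 = 4*(vre^2+vim^2)/(1+q)^2 := by
  have h1 : (0:ℝ) < 1+q := by rw [hq]; positivity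
  subst hr hq
  field_simp
  ring

lemma chord_id (xre xim yre yim : ℝ) :
    ((2/(1+(yre^2+yim^2)))*yre - (2/(1+(xre^2+xim^2)))*xre)^2
    + ((2/(1+(yre^2+yim^2)))*yim - (2/(1+(xre^2+xim^2)))*xim)^2
    + ((1 - 2/(1+(yre^2+yim^2))) - (1 - 2/(1+(xre^2+xim^2))))^2
    = 4*((xre-yre)^2+(xim-yim)^2) / ((1+(xre^2+xim^2))*(1+(yre^2+yim^2))) := by
  have h1 : (0:ℝ) < 1+(xre^2+xim^2) := by positivity
  have h2 : (0:ℝ) < 1+(yre^2+yim^2) := by positivity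
  field_simp
  ring

set_option maxHeartbeats 1000000 in
lemma key (h : ℂ → ℂ) (hdiff : Differentiable ℂ h) (M : ℝ)
    (hb : ∀ u : ℂ, ‖deriv h u‖ / (1 + ‖h u‖^2) ≤ M) (a b : ℂ) :
    chord (h a) (h b) ≤ M * ‖b - a‖ := by
  have hM0 : 0 ≤ M := le_trans (by positivity) (hb a)
  set γ : ℝ → ℂ := fun t => a + t • (b - a) with hγdef
  have hγ0 : γ 0 = a := by simp [hγdef]
  have hγ1 : γ 1 = b := by simp [hγdef]
  have hγd : ∀ t : ℝ, HasDerivAt γ (b - a) t := by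
    intro t
    simpa [hγdef] using ((hasDerivAt_id t).smul_const (b - a)).const_add a
  set H : ℝ → ℂ := fun t => h (γ t) with hHdef
  set v : ℝ → ℂ := fun t => (b - a) • deriv h (γ t) with hvdef
  have hH : ∀ t, HasDerivAt H (v t) t := by
    intro t
    have := HasDerivAt.scomp (x := t) (hdiff (γ t)).hasDerivAt (hγd t)
    simpa [hHdef, hvdef, Function.comp_def] using this
  set q : ℝ → ℝ := fun t => (H t).re^2 + (H t).im^2 with hqdef
  have hqpos : ∀ t, (0:ℝ) < 1 + q t := by
    intro t; simp only [hqdef]; positivity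
  set r : ℝ → ℝ := fun t => 2*((H t).re*(v t).re + (H t).im*(v t).im) with hrdef
  have hre : ∀ t, HasDerivAt (fun u => (H u).re) ((v t).re) t := by
    intro t
    simpa [Function.comp_def] using (Complex.reCLM.hasFDerivAt (x := H t)).comp_hasDerivAt t (hH t)
  have him : ∀ t, HasDerivAt (fun u => (H u).im) ((v t).im) t := by
    intro t
    simpa [Function.comp_def] using (Complex.imCLM.hasFDerivAt (x := H t)).comp_hasDerivAt t (hH t)
  have hq : ∀ t, HasDerivAt q (r t) t := by
    intro t
    have h1 := ((hre t).pow 2).add ((him t).pow 2)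
    refine h1.congr_deriv ?_
    simp only [hrdef]
    ring
  set c : ℝ → ℝ := fun t => 2 / (1 + q t) with hcdef
  set c' : ℝ → ℝ := fun t => -(2 * r t) / (1 + q t)^2 with hc'def
  have hc : ∀ t, HasDerivAt c (c' t) t := by
    intro t
    have h1 := (hasDerivAt_const t (2:ℝ)).div ((hasDerivAt_const t (1:ℝ)).add (hq t))
      (ne_of_gt (hqpos t))
    refine h1.congr_deriv ?_
    simp only [hc'def]
    field_simp
    simp only [Pi.add_apply]
    ring
  set Are : ℝ → ℝ := fun t => c t * (H t).re with hAredef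
  set Aim : ℝ → ℝ := fun t => c t * (H t).im with hAimdef
  set ψ : ℝ → ℝ := fun t => 1 - c t with hψdef
  set Are' : ℝ → ℝ := fun t => c' t * (H t).re + c t * (v t).re with hAre'def
  set Aim' : ℝ → ℝ := fun t => c' t * (H t).im + c t * (v t).im with hAim'def
  have hAre : ∀ t, HasDerivAt Are (Are' t) t := fun t => (hc t).mul (hre t)
  have hAim : ∀ t, HasDerivAt Aim (Aim' t) t := fun t => (hc t).mul (him t)
  have hψ : ∀ t, HasDerivAt ψ (-(c' t)) t := by
    intro t
    simpa [hψdef, Pi.sub_def] using (hasDerivAt_const t (1:ℝ)).sub (hc t)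
  set pre : ℝ := Are 1 - Are 0 with hpredef
  set pim : ℝ := Aim 1 - Aim 0 with hpimdef
  set κ : ℝ := ψ 1 - ψ 0 with hκdef
  set φ : ℝ → ℝ := fun t => pre * Are t + pim * Aim t + κ * ψ t with hφdef
  set φ' : ℝ → ℝ := fun t => pre * Are' t + pim * Aim' t + κ * (-(c' t)) with hφ'def
  have hφ : ∀ t, HasDerivAt φ (φ' t) t := fun t =>
    (((hAre t).const_mul pre).add ((hAim t).const_mul pim)).add ((hψ t).const_mul κ)
  set X : ℝ := pre^2 + pim^2 + κ^2 with hXdef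
  set D : ℝ := Real.sqrt X with hDdef
  -- bound on φ'
  have hφ'bound : ∀ t, |φ' t| ≤ D * (2 * M * ‖b - a‖) := by
    intro t
    have h1 := cs3 pre pim κ (Are' t) (Aim' t) (-(c' t))
    have h2 : Are' t ^2 + Aim' t ^2 + (-(c' t))^2 = 4*((v t).re^2+(v t).im^2)/(1+q t)^2 := by
      have := deriv_norm_id (H t).re (H t).im (v t).re (v t).im (q t) (r t) rfl rfl
      simp only [hAre'def, hAim'def, hc'def]
      linear_combination this
    have h3 : Real.sqrt (Are' t ^2 + Aim' t ^2 + (-(c' t))^2) = 2 * ‖v t‖ / (1 + q t) := by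
      rw [h2]
      have hvn : (v t).re^2+(v t).im^2 = ‖v t‖^2 := (normsq (v t)).symm
      have e : 4*‖v t‖^2/(1+q t)^2 = (2*‖v t‖/(1+q t))^2 := by
        rw [div_pow]; congr 1; ring
      rw [hvn, e]
      exact Real.sqrt_sq (by positivity)
    have h4 : 2 * ‖v t‖ / (1 + q t) ≤ 2 * M * ‖b - a‖ := by
      have hv : ‖v t‖ = ‖b - a‖ * ‖deriv h (γ t)‖ := by rw [hvdef]; exact norm_smul _ _
      have hq' : (1:ℝ) + q t = 1 + ‖h (γ t)‖^2 := by
        simp only [hqdef, hHdef]; rw [normsq]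
      have h5 := hb (γ t)
      rw [div_le_iff₀ (spos (h (γ t)))] at h5
      rw [hv, hq', div_le_iff₀ (spos (h (γ t)))]
      nlinarith [norm_nonneg (b-a), spos (h (γ t)), norm_nonneg (deriv h (γ t))]
    calc |φ' t| ≤ D * Real.sqrt (Are' t ^2 + Aim' t ^2 + (-(c' t))^2) := h1
      _ ≤ D * (2 * M * ‖b - a‖) := by
          rw [h3]; exact mul_le_mul_of_nonneg_left h4 (Real.sqrt_nonneg _)
  -- MVT
  have hmvt : ‖φ 1 - φ 0‖ ≤ D * (2 * M * ‖b - a‖) :=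
    norm_image_sub_le_of_norm_deriv_le_segment_01'
      (fun x _ => (hφ x).hasDerivWithinAt)
      (fun x _ => by rw [Real.norm_eq_abs]; exact hφ'bound x)
  have hφ10 : φ 1 - φ 0 = X := by
    simp only [hφdef, hXdef, hpredef, hpimdef, hκdef]
    ring
  have hX0 : 0 ≤ X := by simp only [hXdef]; positivity
  have hXle : X ≤ D * (2 * M * ‖b - a‖) := by
    calc X = φ 1 - φ 0 := hφ10.symm
      _ ≤ ‖φ 1 - φ 0‖ := le_abs_self _
      _ ≤ _ := hmvt
  -- identify X with the chordal distance
  have hchord0 : 0 ≤ chord (h a) (h b) := by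
    unfold chord; positivity
  have hchord2 : (2 * chord (h a) (h b))^2
      = 4*‖h a - h b‖^2/((1+‖h a‖^2)*(1+‖h b‖^2)) := by
    unfold chord
    rw [mul_pow, div_pow, mul_pow, Real.sq_sqrt (spos _).le, Real.sq_sqrt (spos _).le]
    ring
  have hX : X = (2 * chord (h a) (h b))^2 := by
    rw [hchord2]
    have e0 : H 0 = h a := by simp only [hHdef]; rw [hγ0]
    have e1 : H 1 = h b := by simp only [hHdef]; rw [hγ1]
    have hnxy : ‖h a - h b‖^2 = ((h a).re - (h b).re)^2 + ((h a).im - (h b).im)^2 := by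
      rw [normsq]; simp [Complex.sub_re, Complex.sub_im]
    have hid := chord_id (h a).re (h a).im (h b).re (h b).im
    have epre : pre = (2/(1+((h b).re^2+(h b).im^2)))*(h b).re
        - (2/(1+((h a).re^2+(h a).im^2)))*(h a).re := by
      simp only [hpredef, hAredef, hcdef, hqdef, e0, e1]
    have epim : pim = (2/(1+((h b).re^2+(h b).im^2)))*(h b).im
        - (2/(1+((h a).re^2+(h a).im^2)))*(h a).im := by
      simp only [hpimdef, hAimdef, hcdef, hqdef, e0, e1]
    have eκ : κ = (1 - 2/(1+((h b).re^2+(h b).im^2))) - (1 - 2/(1+((h a).re^2+(h a).im^2))) := by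
      simp only [hκdef, hψdef, hcdef, hqdef, e0, e1]
    rw [hXdef, epre, epim, eκ, hnxy, normsq (h a), normsq (h b)]
    linear_combination hid
  have hD2 : D = 2 * chord (h a) (h b) := by
    rw [hDdef, hX]
    exact Real.sqrt_sq (by linarith)
  have hXD : X = D^2 := by rw [hDdef, Real.sq_sqrt hX0]
  by_cases hD0 : D = 0
  · have : chord (h a) (h b) = 0 := by linarith [hD2 ▸ hD0]
    rw [this]; positivity
  · have hDpos : 0 < D := lt_of_le_of_ne (Real.sqrt_nonneg _) (Ne.symm hD0)
    have hDle : D ≤ 2 * M * ‖b - a‖ := by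
      rw [hXD] at hXle
      nlinarith
    linarith [hD2 ▸ hDle]
end S3

open S3 in
theorem statement3 (d : ℕ) (hd : 1 < d) (n : ℕ) (hn : 1 ≤ n) (lam : ℂ) (L ε : ℝ)
    (hL : L = ⨆ z : ℂ, csharp ((fc d lam)^[n - 1]) z)
    (hε : ε = (4 * L) ^ (-(1 : ℝ) / ((d : ℝ) - 1))) :
    ∀ z w : ℂ, ‖z‖ < ε → ‖w‖ < ε →
      chord ((fc d lam)^[n] z) ((fc d lam)^[n] w) ≤ ε / 2 := by
  intro z w hz hw
  set h : ℂ → ℂ := (fc d lam)^[n-1] with hh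
  have hbdd : BddAbove (Set.range (csharp h)) := bdd d hd lam (n-1)
  have hcsup : ∀ u : ℂ, csharp h u ≤ L := by
    intro u; rw [hL]; exact le_ciSup hbdd u
  obtain ⟨z0, hz0⟩ := csharp_iter_pos d hd lam (n-1)
  have hLpos : 0 < L := lt_of_lt_of_le hz0 (hcsup z0)
  have h4L : (0:ℝ) < 4*L := by linarith
  have hεpos : 0 < ε := by rw [hε]; exact Real.rpow_pos_of_pos h4L _
  have hεpow : ε^(d-1) = (4*L)⁻¹ := by
    rw [hε, ← Real.rpow_natCast ((4*L) ^ (-(1:ℝ)/((d:ℝ)-1))) (d-1), ← Real.rpow_mul h4L.le]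
    have hc : ((d-1:ℕ):ℝ) = (d:ℝ)-1 := by
      push_cast [Nat.cast_sub hd.le]; ring
    have hd1 : ((d:ℝ) - 1) ≠ 0 := by
      have : (2:ℝ) ≤ d := by exact_mod_cast hd
      linarith
    have he : (-(1:ℝ)/((d:ℝ)-1)) * ((d-1 : ℕ):ℝ) = -1 := by
      rw [hc]; field_simp
    rw [he, Real.rpow_neg_one]
  have hbL : ∀ u : ℂ, ‖deriv h u‖ / (1+‖h u‖^2) ≤ L := by
    intro u
    refine le_trans ?_ (hcsup u)
    unfold csharp
    have h1 : ‖deriv h u‖ ≤ ‖deriv h u‖ * (1+‖u‖^2) :=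
      le_mul_of_one_le_right (norm_nonneg _) (by nlinarith [sq_nonneg ‖u‖])
    exact (div_le_div_iff_of_pos_right (spos (h u))).mpr h1
  have hiterz : (fc d lam)^[n] z = h ((fc d lam) z) := by
    conv_lhs => rw [show n = (n-1)+1 by omega]
    rw [Function.iterate_succ_apply]
  have hiterw : (fc d lam)^[n] w = h ((fc d lam) w) := by
    conv_lhs => rw [show n = (n-1)+1 by omega]
    rw [Function.iterate_succ_apply]
  rw [hiterz, hiterw]
  have hkey := key h (iter_diff d lam (n-1)) L hbL ((fc d lam) z) ((fc d lam) w)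
  refine le_trans hkey ?_
  have hsub : ‖fc d lam w - fc d lam z‖ ≤ 2 * ε^d := by
    have e : fc d lam w - fc d lam z = w^d - z^d := by unfold fc; ring
    rw [e]
    calc ‖w^d - z^d‖ ≤ ‖w^d‖ + ‖z^d‖ := norm_sub_le _ _
      _ = ‖w‖^d + ‖z‖^d := by rw [norm_pow, norm_pow]
      _ ≤ ε^d + ε^d := by
          gcongr <;> first | exact norm_nonneg _ | exact hw.le | exact hz.le
      _ = 2*ε^d := by ring
  calc L * ‖fc d lam w - fc d lam z‖ ≤ L * (2*ε^d) :=
        mul_le_mul_of_nonneg_left hsub hLpos.le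
    _ = ε/2 := by
        have e : ε^d = ε^(d-1) * ε := by rw [← pow_succ]; congr 1; omega
        rw [e, hεpow]
        field_simp
        ring
end

section
/- For every integer n ≥ 1 and every λ ∈ M_f (that is, every λ ∈ ℂ with sup_{k≥0} |F_k(λ)| < ∞), one has log( sup_{z∈ℂ} (f_λ^n)^#(z) ) ≤ 2n·log d + (4/(d−1))·sup_{z∈ℂ} |log([z,∞]^d / [f_λ(z),∞])|. -/
namespace St6

open Finset

/-! ### Basic facts about `fc` -/

lemma fc_diff (d : ℕ) (lam : ℂ) : Differentiable ℂ (fc d lam) := by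
  have : (fc d lam) = fun z => z ^ d + lam := rfl
  rw [this]
  exact (differentiable_pow d).add_const lam

lemma fc_deriv (d : ℕ) (lam : ℂ) (z : ℂ) : deriv (fc d lam) z = (d : ℂ) * z ^ (d - 1) := by
  have : (fc d lam) = fun z => z ^ d + lam := rfl
  rw [this]
  simp [deriv_add_const, deriv_pow]

lemma deriv_iter (d : ℕ) (lam : ℂ) (n : ℕ) (z : ℂ) :
    deriv ((fc d lam)^[n]) z = ∏ k ∈ range n, ((d : ℂ) * (((fc d lam)^[k] z) ^ (d - 1))) := by
  induction n with
  | zero => simp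
  | succ n ih =>
      have h1 : (fc d lam)^[n + 1] = (fc d lam) ∘ (fc d lam)^[n] :=
        Function.iterate_succ' _ _
      rw [h1, deriv_comp z ((fc_diff d lam).differentiableAt)
        (((fc_diff d lam).iterate n).differentiableAt), fc_deriv, ih,
        prod_range_succ, mul_comm]

lemma csharp_iter (d : ℕ) (lam : ℂ) (n : ℕ) (z : ℂ) :
    csharp ((fc d lam)^[n]) z =
      ((d : ℝ) ^ n * ∏ k ∈ range n, ‖(fc d lam)^[k] z‖ ^ (d - 1)) * (1 + ‖z‖ ^ 2) /
        (1 + ‖(fc d lam)^[n] z‖ ^ 2) := by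
  unfold csharp
  rw [deriv_iter, norm_prod]
  congr 2
  have : ∀ k ∈ range n, ‖(d : ℂ) * (((fc d lam)^[k] z) ^ (d - 1))‖
      = (d : ℝ) * ‖(fc d lam)^[k] z‖ ^ (d - 1) := by
    intro k _
    rw [norm_mul, norm_pow, Complex.norm_natCast]
  rw [Finset.prod_congr rfl this, Finset.prod_mul_distrib, Finset.prod_const, card_range]

/-! ### `ρ` with `ρ^(d-1) = d` -/

lemma exists_rho {d : ℕ} (hd : 1 < d) :
    ∃ ρ : ℝ, 1 ≤ ρ ∧ ρ ≤ 2 ∧ ρ ^ (d - 1) = (d : ℝ) := by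
  have hcont : ContinuousOn (fun x : ℝ => x ^ (d - 1)) (Set.Icc 1 2) :=
    (continuous_pow _).continuousOn
  have hmem : (d : ℝ) ∈ Set.Icc ((1 : ℝ) ^ (d - 1)) ((2 : ℝ) ^ (d - 1)) := by
    constructor
    · rw [one_pow]; exact_mod_cast hd.le
    · have h1 : d ≤ 2 ^ (d - 1) := by
        have h2 := Nat.lt_two_pow_self (n := d - 1)
        omega
      calc (d : ℝ) ≤ ((2 ^ (d - 1) : ℕ) : ℝ) := by exact_mod_cast h1
        _ = (2 : ℝ) ^ (d - 1) := by push_cast; ring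
  obtain ⟨ρ, hρmem, hρeq⟩ := intermediate_value_Icc one_le_two hcont hmem
  exact ⟨ρ, hρmem.1, hρmem.2, hρeq⟩

/-! ### The abstract sequence lemma -/

section Seq

variable {d : ℕ} {L : ℝ} {r : ℕ → ℝ}

lemma escape_step (hd : 1 < d) (hr : ∀ k, 0 ≤ r k)
    (hlo : ∀ k, r k ^ d - L ≤ r (k + 1))
    {ρ : ℝ} (hρ1 : 1 ≤ ρ) (hρd : ρ ^ (d - 1) = (d : ℝ)) (hLρ : L ≤ ρ)
    {k : ℕ} (hk : ρ ≤ r k) :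
    ρ ≤ r (k + 1) ∧ r k ≤ r (k + 1) ∧ r k ^ d ≤ 2 * r (k + 1) := by
  have h0 : (0 : ℝ) ≤ ρ := le_trans zero_le_one hρ1
  have hd2 : (2 : ℝ) ≤ (d : ℝ) := by exact_mod_cast hd
  have hpow : (d : ℝ) ≤ r k ^ (d - 1) := by
    rw [← hρd]; exact pow_le_pow_left₀ h0 hk _
  have hrd : r k ^ d = r k ^ (d - 1) * r k := by
    rw [← pow_succ]; congr 1; omega
  have h2rk : 2 * r k ≤ r k ^ d := by
    rw [hrd]
    have h1 : (2 : ℝ) * r k ≤ (d : ℝ) * r k :=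
      mul_le_mul_of_nonneg_right hd2 (hr k)
    have h2 : (d : ℝ) * r k ≤ r k ^ (d - 1) * r k :=
      mul_le_mul_of_nonneg_right hpow (hr k)
    linarith
  have hlok := hlo k
  refine ⟨by linarith, by linarith, by linarith⟩

lemma escape_chain (hd : 1 < d) (hr : ∀ k, 0 ≤ r k)
    (hlo : ∀ k, r k ^ d - L ≤ r (k + 1))
    {ρ : ℝ} (hρ1 : 1 ≤ ρ) (hρd : ρ ^ (d - 1) = (d : ℝ)) (hLρ : L ≤ ρ)
    {m : ℕ} (hm : ρ ≤ r m) :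
    ∀ j, ρ ≤ r (m + j) ∧ r m ≤ r (m + j) ∧
      (∏ i ∈ range j, r (m + i) ^ (d - 1)) * r m ≤ 2 ^ j * r (m + j) := by
  intro j
  induction j with
  | zero =>
      refine ⟨by simpa using hm, by simp, ?_⟩
      simp
  | succ j ih =>
      obtain ⟨h1, h2, h3⟩ := ih
      obtain ⟨g1, g2, g3⟩ := escape_step hd hr hlo hρ1 hρd hLρ h1
      have hmj : m + (j + 1) = (m + j) + 1 := by omega
      refine ⟨by rw [hmj]; exact g1, by rw [hmj]; exact le_trans h2 g2, ?_⟩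
      rw [prod_range_succ, hmj]
      have hnn : (0 : ℝ) ≤ r (m + j) ^ (d - 1) := pow_nonneg (hr _) _
      calc (∏ i ∈ range j, r (m + i) ^ (d - 1)) * r (m + j) ^ (d - 1) * r m
          = ((∏ i ∈ range j, r (m + i) ^ (d - 1)) * r m) * r (m + j) ^ (d - 1) := by ring
        _ ≤ (2 ^ j * r (m + j)) * r (m + j) ^ (d - 1) :=
            mul_le_mul_of_nonneg_right h3 hnn
        _ = 2 ^ j * (r (m + j) ^ (d - 1) * r (m + j)) := by ring
        _ = 2 ^ j * r (m + j) ^ d := by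
            congr 1
            rw [← pow_succ]; congr 1; omega
        _ ≤ 2 ^ j * (2 * r ((m + j) + 1)) := by
            have := g3
            have h2j : (0:ℝ) ≤ 2 ^ j := by positivity
            exact mul_le_mul_of_nonneg_left g3 h2j
        _ = 2 ^ (j + 1) * r ((m + j) + 1) := by ring

lemma three_pow_ge {d : ℕ} (hd : 3 ≤ d) : (d : ℕ) ^ 2 ≤ 3 ^ (d - 1) := by
  induction d with
  | zero => omega
  | succ n ih =>
      rcases Nat.lt_or_ge n 3 with h | h
      · interval_cases n <;> simp_all <;> omega
      · have hn := ih (by omega)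
        have hs : n + 1 - 1 = (n - 1) + 1 := by omega
        have h1 : (n + 1) ^ 2 ≤ 3 * n ^ 2 := by nlinarith
        calc (n + 1) ^ 2 ≤ 3 * n ^ 2 := h1
          _ ≤ 3 * 3 ^ (n - 1) := Nat.mul_le_mul_left 3 hn
          _ = 3 ^ ((n - 1) + 1) := by rw [pow_succ]; ring
          _ = 3 ^ (n + 1 - 1) := by rw [hs]

private lemma step_final {C x y : ℝ} (a : ℝ) (haC : a ≤ C) (hx : 0 ≤ x) (ha : 0 ≤ a) (hy : 1 ≤ y) :
    a * x ≤ C * x * y := by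
  have hCx : 0 ≤ C * x := mul_nonneg (ha.trans haC) hx
  calc a * x ≤ C * x := mul_le_mul_of_nonneg_right haC hx
    _ ≤ C * x * y := le_mul_of_one_le_right hCx hy

set_option maxHeartbeats 1000000 in
lemma key_seq (hd : 1 < d) (hL0 : 0 ≤ L) (hLd : L ^ (d - 1) ≤ (d : ℝ))
    (hr : ∀ k, 0 ≤ r k) (hlo : ∀ k, r k ^ d - L ≤ r (k + 1))
    {C : ℝ} (hC : 4 ≤ C) (hside : 3 ≤ d ∨ L ≤ 1 ∨ 5 ≤ C)
    (n : ℕ) (hn : 1 ≤ n) :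
    (∏ k ∈ range n, r k ^ (d - 1)) * (1 + r 0 ^ 2) ≤ C * (d : ℝ) ^ n * (1 + r n ^ 2) := by
  obtain ⟨ρ, hρ1, hρ2, hρd⟩ := exists_rho hd
  have hρ0 : (0 : ℝ) ≤ ρ := le_trans zero_le_one hρ1
  have hd2 : (2 : ℝ) ≤ (d : ℝ) := by exact_mod_cast hd
  have hLρ : L ≤ ρ := by
    apply le_of_pow_le_pow_left₀ (n := d - 1) (by omega) hρ0
    rw [hρd]; exact hLd
  have hrn2 : (1 : ℝ) ≤ 1 + r n ^ 2 := by nlinarith [sq_nonneg (r n)]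
  have hdn0 : (0 : ℝ) < (d : ℝ) ^ n := by positivity
  classical
  by_cases hesc : ∃ k, ρ ≤ r k ∧ k < n
  · -- escape case
    obtain ⟨m, ⟨hmρ, hmn⟩, hmin⟩ :
        ∃ m, (ρ ≤ r m ∧ m < n) ∧ ∀ k, k < m → ¬(ρ ≤ r k ∧ k < n) :=
      ⟨Nat.find hesc, Nat.find_spec hesc, fun k hk => Nat.find_min hesc hk⟩
    have hlowm : ∀ k, k < m → r k < ρ := by
      intro k hk
      by_contra hcon
      push_neg at hcon
      exact (hmin k hk) ⟨hcon, by omega⟩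
    obtain ⟨hn1, hn2, hn3⟩ := escape_chain hd hr hlo hρ1 hρd hLρ hmρ (n - m)
    rw [show m + (n - m) = n by omega] at hn1 hn2 hn3
    -- split the product
    have hsplit : (∏ k ∈ range n, r k ^ (d - 1)) =
        (∏ k ∈ range m, r k ^ (d - 1)) * (∏ i ∈ range (n - m), r (m + i) ^ (d - 1)) := by
      have h := Finset.prod_range_add (fun k => r k ^ (d - 1)) m (n - m)
      rw [show m + (n - m) = n by omega] at h
      exact h
    obtain ⟨P1, hP1⟩ : ∃ p : ℝ, p = ∏ k ∈ range m, r k ^ (d - 1) := ⟨_, rfl⟩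
    obtain ⟨P2, hP2⟩ : ∃ p : ℝ, p = ∏ i ∈ range (n - m), r (m + i) ^ (d - 1) := ⟨_, rfl⟩
    rw [← hP2] at hn3
    rw [← hP1, ← hP2] at hsplit
    have hP1nn : 0 ≤ P1 := hP1 ▸ Finset.prod_nonneg fun i _ => pow_nonneg (hr i) _
    have hP2nn : 0 ≤ P2 := hP2 ▸ Finset.prod_nonneg fun i _ => pow_nonneg (hr _) _
    have hP2le : P2 ≤ 2 ^ (n - m) * r n := by
      have h1 : P2 * 1 ≤ P2 * r m := by
        apply mul_le_mul_of_nonneg_left _ hP2nn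
        linarith
      rw [mul_one] at h1
      exact le_trans h1 hn3
    have hrmono2 : 2 * r n ≤ 1 + r n ^ 2 := by nlinarith [sq_nonneg (r n - 1)]
    have hpow2d : (2 : ℝ) ^ (n - m) ≤ (d : ℝ) ^ (n - m) :=
      pow_le_pow_left₀ (by norm_num) hd2 _
    have hdmn : (d : ℝ) ^ m * (d : ℝ) ^ (n - m) = (d : ℝ) ^ n := by
      rw [← pow_add]; congr 1; omega
    rcases Nat.eq_zero_or_pos m with hm0 | hm1
    · -- m = 0 : r 0 ≥ ρ ≥ 1
      rw [hm0] at hmρ hn2 hn3 hpow2d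
      have hr01 : 1 ≤ r 0 := le_trans hρ1 hmρ
      have hP1one : P1 = 1 := by rw [hP1, hm0]; simp
      have h1r0 : 1 + r 0 ^ 2 ≤ 2 * r 0 ^ 2 := by nlinarith
      have hrnn : 0 ≤ r n := hr n
      have hrnrn : r n * r n ≤ 1 + r n ^ 2 := by nlinarith [sq_nonneg (r n)]
      have h2C : (2 : ℝ) ≤ C := by linarith
      rw [hsplit, hP1one, one_mul]
      calc P2 * (1 + r 0 ^ 2) ≤ P2 * (2 * r 0 ^ 2) :=
            mul_le_mul_of_nonneg_left h1r0 hP2nn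
        _ = 2 * r 0 * (P2 * r 0) := by ring
        _ ≤ 2 * r 0 * (2 ^ (n - 0) * r n) := by
            apply mul_le_mul_of_nonneg_left hn3
            positivity
        _ = 2 * 2 ^ (n - 0) * (r 0 * r n) := by ring
        _ ≤ 2 * (d : ℝ) ^ (n - 0) * (r n * r n) := by
            apply mul_le_mul
            · have h3 : (2:ℝ) ^ (n - 0) ≤ (d : ℝ) ^ (n - 0) := hpow2d
              linarith
            · exact mul_le_mul_of_nonneg_right hn2 hrnn
            · positivity
            · positivity
        _ ≤ 2 * (d : ℝ) ^ (n - 0) * (1 + r n ^ 2) := by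
            apply mul_le_mul_of_nonneg_left hrnrn
            positivity
        _ ≤ C * (d : ℝ) ^ n * (1 + r n ^ 2) := by
            simp only [Nat.sub_zero]
            apply mul_le_mul_of_nonneg_right _ (by positivity)
            exact mul_le_mul_of_nonneg_right h2C hdn0.le
    · -- m ≥ 1
      have hr0ρ : r 0 < ρ := hlowm 0 hm1
      have h1r0 : 1 + r 0 ^ 2 ≤ 5 := by
        nlinarith [hr 0, hρ0, hρ2, hr0ρ.le]
      have hP1le : P1 ≤ (d : ℝ) ^ m := by
        have h := Finset.prod_le_prod (f := fun k => r k ^ (d - 1))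
          (g := fun _ => (d : ℝ)) (s := range m)
          (fun i _ => pow_nonneg (hr i) _)
          (fun i hi => by
            rw [Finset.mem_range] at hi
            calc r i ^ (d - 1) ≤ ρ ^ (d - 1) :=
                  pow_le_pow_left₀ (hr i) (le_of_lt (hlowm i hi)) _
              _ = (d : ℝ) := hρd)
        rw [hP1]
        simpa using h
      have hdm0 : (0:ℝ) ≤ (d:ℝ)^m := by positivity
      rw [hsplit]
      calc P1 * P2 * (1 + r 0 ^ 2) ≤ P1 * P2 * 5 := by
            apply mul_le_mul_of_nonneg_left h1r0 (mul_nonneg hP1nn hP2nn)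
        _ ≤ (d : ℝ) ^ m * P2 * 5 := by
            apply mul_le_mul_of_nonneg_right _ (by norm_num)
            exact mul_le_mul_of_nonneg_right hP1le hP2nn
        _ ≤ (d : ℝ) ^ m * (2 ^ (n - m) * r n) * 5 := by
            apply mul_le_mul_of_nonneg_right _ (by norm_num)
            exact mul_le_mul_of_nonneg_left hP2le hdm0
        _ = (5 / 2) * ((d : ℝ) ^ m * 2 ^ (n - m)) * (2 * r n) := by ring
        _ ≤ (5 / 2) * ((d : ℝ) ^ m * (d : ℝ) ^ (n - m)) * (1 + r n ^ 2) := by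
            apply mul_le_mul
            · have ha : (d : ℝ) ^ m * 2 ^ (n - m) ≤ (d : ℝ) ^ m * (d : ℝ) ^ (n - m) :=
                mul_le_mul_of_nonneg_left hpow2d hdm0
              linarith
            · exact hrmono2
            · have := hr n; linarith
            · positivity
        _ = (5 / 2) * (d : ℝ) ^ n * (1 + r n ^ 2) := by rw [hdmn]
        _ ≤ C * (d : ℝ) ^ n * (1 + r n ^ 2) := by
            apply mul_le_mul_of_nonneg_right _ (by positivity)
            apply mul_le_mul_of_nonneg_right _ hdn0.le
            linarith
  · -- low case : ∀ k < n, r k < ρ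
    have hlow : ∀ k, k < n → r k < ρ := by
      intro k hk
      by_contra hcon
      push_neg at hcon
      exact hesc ⟨k, hcon, hk⟩
    have hprodd : (∏ k ∈ range n, r k ^ (d - 1)) ≤ (d : ℝ) ^ n := by
      have h := Finset.prod_le_prod (f := fun k => r k ^ (d - 1))
        (g := fun _ => (d : ℝ)) (s := range n)
        (fun i _ => pow_nonneg (hr i) _)
        (fun i hi => by
          rw [Finset.mem_range] at hi
          calc r i ^ (d - 1) ≤ ρ ^ (d - 1) :=
                pow_le_pow_left₀ (hr i) (le_of_lt (hlow i hi)) _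
            _ = (d : ℝ) := hρd)
      simpa using h
    have hprodnn : (0:ℝ) ≤ ∏ k ∈ range n, r k ^ (d - 1) :=
      Finset.prod_nonneg fun i _ => pow_nonneg (hr i) _
    have hr0ρ : r 0 < ρ := hlow 0 hn
    by_cases h3d : 3 ≤ d
    · -- 3 ≤ d : 1 + ρ² ≤ 4
      have hρsq : ρ ^ 2 ≤ 3 := by
        apply le_of_pow_le_pow_left₀ (n := d - 1) (by omega) (by norm_num)
        calc (ρ ^ 2) ^ (d - 1) = (ρ ^ (d - 1)) ^ 2 := by
              rw [← pow_mul, ← pow_mul, mul_comm]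
          _ = (d : ℝ) ^ 2 := by rw [hρd]
          _ = ((d ^ 2 : ℕ) : ℝ) := by push_cast; ring
          _ ≤ ((3 ^ (d - 1) : ℕ) : ℝ) := by exact_mod_cast three_pow_ge h3d
          _ = (3 : ℝ) ^ (d - 1) := by push_cast; ring
      have h1r0 : 1 + r 0 ^ 2 ≤ 4 := by
        nlinarith [hr 0, hρ0, hρsq, hr0ρ.le]
      calc (∏ k ∈ range n, r k ^ (d - 1)) * (1 + r 0 ^ 2)
          ≤ (d : ℝ) ^ n * 4 :=
            mul_le_mul hprodd h1r0 (by positivity) (by positivity)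
        _ = 4 * (d : ℝ) ^ n := by ring
        _ ≤ C * (d : ℝ) ^ n * (1 + r n ^ 2) := step_final 4 hC hdn0.le (by norm_num) hrn2
    · -- d = 2
      have hd2' : d = 2 := by omega
      rcases hside with h3d' | hL1 | hC5
      · omega
      · -- d = 2, L ≤ 1
        subst hd2'
        have hρeq : ρ = 2 := by
          have h := hρd
          norm_num at h
          exact h
        subst hρeq
        have h21 : (2:ℕ) - 1 = 1 := rfl
        have hcast : ((2:ℕ):ℝ) = (2:ℝ) := by norm_num
        rw [h21, hcast]
        simp only [pow_one]
        rcases Nat.eq_or_lt_of_le hn with hn1 | hn2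
        · -- n = 1
          have hn1' : n = 1 := hn1.symm
          subst hn1'
          rw [range_one, prod_singleton, pow_one]
          have hl0 := hlo 0
          have hr0 := hr 0
          have hr1 := hr 1
          have hr02 : r 0 < 2 := hr0ρ
          have hkey : r 0 * (1 + r 0 ^ 2) ≤ 8 * (1 + r 1 ^ 2) := by
            rcases le_or_gt (r 0) 1 with h1 | h1
            · nlinarith [sq_nonneg (r 1)]
            · have hr1ge : r 0 ^ 2 - 1 ≤ r 1 := by
                have h2 : r 0 ^ 2 - L ≤ r 1 := hl0
                linarith
              nlinarith [sq_nonneg (r 0 - 1), sq_nonneg (r 0 ^ 2 - 1),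
                sq_nonneg (r 1 - (r 0 ^ 2 - 1))]
          nlinarith [hkey, mul_nonneg (by linarith : (0:ℝ) ≤ C * 2 - 8)
            (by positivity : (0:ℝ) ≤ 1 + r 1 ^ 2)]
        · -- n ≥ 2
          have hr1ρ : r 1 < 2 := hlow 1 (by omega)
          have hr0sq : r 0 ^ 2 ≤ 3 := by nlinarith [hlo 0, hr 1]
          have h1r0 : 1 + r 0 ^ 2 ≤ 4 := by linarith
          have hprod2 : (∏ k ∈ range n, r k) ≤ (2:ℝ) ^ n := by
            have h := Finset.prod_le_prod (f := fun k => r k)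
              (g := fun _ => (2 : ℝ)) (s := range n)
              (fun i _ => hr i)
              (fun i hi => by
                rw [Finset.mem_range] at hi
                exact (hlow i hi).le)
            simpa using h
          calc (∏ k ∈ range n, r k) * (1 + r 0 ^ 2)
              ≤ (2:ℝ) ^ n * 4 :=
                mul_le_mul hprod2 h1r0 (by positivity) (by positivity)
            _ = 4 * (2:ℝ) ^ n := by ring
            _ ≤ C * (2:ℝ) ^ n * (1 + r n ^ 2) :=
                step_final 4 hC (by positivity) (by norm_num) hrn2
      · -- 5 ≤ C
        have h1r0 : 1 + r 0 ^ 2 ≤ 5 := by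
          nlinarith [hr 0, hρ0, hρ2, hr0ρ.le]
        calc (∏ k ∈ range n, r k ^ (d - 1)) * (1 + r 0 ^ 2)
            ≤ (d : ℝ) ^ n * 5 :=
              mul_le_mul hprodd h1r0 (by positivity) (by positivity)
          _ = 5 * (d : ℝ) ^ n := by ring
          _ ≤ C * (d : ℝ) ^ n * (1 + r n ^ 2) := step_final 5 hC5 hdn0.le (by norm_num) hrn2

end Seq

/-! ### bound on `‖lam‖` from bounded orbit -/

lemma norm_fc_ge (d : ℕ) (lam w : ℂ) : ‖w‖ ^ d - ‖lam‖ ≤ ‖fc d lam w‖ := by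
  have h : ‖w ^ d‖ ≤ ‖w ^ d + lam‖ + ‖lam‖ := by
    calc ‖w ^ d‖ = ‖w ^ d + lam - lam‖ := by rw [add_sub_cancel_right]
      _ ≤ ‖w ^ d + lam‖ + ‖lam‖ := norm_sub_le _ _
  rw [norm_pow] at h
  have : ‖fc d lam w‖ = ‖w ^ d + lam‖ := rfl
  linarith [this]

lemma norm_fc_le (d : ℕ) (lam w : ℂ) : ‖fc d lam w‖ ≤ ‖w‖ ^ d + ‖lam‖ := by
  have : ‖fc d lam w‖ = ‖w ^ d + lam‖ := rfl
  rw [this]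
  calc ‖w ^ d + lam‖ ≤ ‖w ^ d‖ + ‖lam‖ := norm_add_le _ _
    _ = ‖w‖ ^ d + ‖lam‖ := by rw [norm_pow]

lemma lam_bound {d : ℕ} (hd : 1 < d) {lam : ℂ}
    (hlam : BddAbove (Set.range fun k : ℕ => ‖(fc d lam)^[k] 0‖)) :
    ‖lam‖ ^ (d - 1) ≤ (d : ℝ) := by
  by_contra hcon
  push_neg at hcon
  have hd2 : (2 : ℝ) ≤ (d : ℝ) := by exact_mod_cast hd
  have hL1 : 1 < ‖lam‖ := by
    by_contra h
    push_neg at h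
    have h2 : ‖lam‖ ^ (d - 1) ≤ 1 := pow_le_one₀ (norm_nonneg _) h
    linarith
  have hc1 : 1 < ‖lam‖ ^ (d - 1) - 1 := by linarith
  have grow : ∀ k, ‖lam‖ * (‖lam‖ ^ (d - 1) - 1) ^ k ≤ ‖(fc d lam)^[k + 1] 0‖ := by
    intro k
    induction k with
    | zero =>
        have h0 : (fc d lam)^[1] 0 = lam := by
          simp [fc, zero_pow (by omega : d ≠ 0)]
        rw [h0]
        simp
    | succ k ih =>
        set w := (fc d lam)^[k + 1] 0 with hwdef
        have hck : (1:ℝ) ≤ (‖lam‖ ^ (d - 1) - 1) ^ k := one_le_pow₀ hc1.le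
        have hw : ‖lam‖ ≤ ‖w‖ := by
          have h1 : ‖lam‖ * 1 ≤ ‖lam‖ * (‖lam‖ ^ (d - 1) - 1) ^ k :=
            mul_le_mul_of_nonneg_left hck (norm_nonneg lam)
          rw [mul_one] at h1
          exact h1.trans ih
        have hge : ‖w‖ ^ d - ‖lam‖ ≤ ‖fc d lam w‖ := norm_fc_ge d lam w
        have hpow : ‖lam‖ ^ (d - 1) ≤ ‖w‖ ^ (d - 1) :=
          pow_le_pow_left₀ (norm_nonneg lam) hw _
        have hwd : ‖w‖ ^ d = ‖w‖ ^ (d - 1) * ‖w‖ := by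
          rw [← pow_succ]; congr 1; omega
        have hstep : (‖lam‖ ^ (d - 1) - 1) * ‖w‖ ≤ ‖fc d lam w‖ := by
          have h2 : ‖lam‖ ^ (d - 1) * ‖w‖ ≤ ‖w‖ ^ (d - 1) * ‖w‖ :=
            mul_le_mul_of_nonneg_right hpow (norm_nonneg w)
          nlinarith [hge, hwd, hw]
        have hiter : (fc d lam)^[k + 2] 0 = fc d lam w := by
          rw [hwdef]
          exact Function.iterate_succ_apply' (fc d lam) (k + 1) 0
        rw [hiter]
        calc ‖lam‖ * (‖lam‖ ^ (d - 1) - 1) ^ (k + 1)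
            = (‖lam‖ ^ (d - 1) - 1) * (‖lam‖ * (‖lam‖ ^ (d - 1) - 1) ^ k) := by ring
          _ ≤ (‖lam‖ ^ (d - 1) - 1) * ‖w‖ :=
              mul_le_mul_of_nonneg_left ih (by linarith)
          _ ≤ ‖fc d lam w‖ := hstep
  obtain ⟨M, hM⟩ := hlam
  have hub : ∀ k, ‖(fc d lam)^[k] 0‖ ≤ M := fun k => hM (Set.mem_range_self k)
  obtain ⟨k, hk⟩ := pow_unbounded_of_one_lt M hc1
  have h1 := grow k
  have h2 := hub (k + 1)
  have h3 : (‖lam‖ ^ (d - 1) - 1) ^ k ≤ ‖lam‖ * (‖lam‖ ^ (d - 1) - 1) ^ k := by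
    have hp : (0:ℝ) ≤ (‖lam‖ ^ (d - 1) - 1) ^ k := by positivity
    nlinarith
  linarith

/-! ### the pointwise bound on `csharp` -/

lemma csharp_le {d : ℕ} (hd : 1 < d) (lam : ℂ)
    (hLd : ‖lam‖ ^ (d - 1) ≤ (d : ℝ)) {C : ℝ} (hC : 4 ≤ C)
    (hside : 3 ≤ d ∨ ‖lam‖ ≤ 1 ∨ 5 ≤ C)
    (n : ℕ) (hn : 1 ≤ n) (z : ℂ) :
    csharp ((fc d lam)^[n]) z ≤ C * (d : ℝ) ^ (2 * n) := by
  have hkey := key_seq (L := ‖lam‖) (r := fun k => ‖(fc d lam)^[k] z‖) hd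
    (norm_nonneg lam) hLd (fun k => norm_nonneg _)
    (fun k => by
      show ‖(fc d lam)^[k] z‖ ^ d - ‖lam‖ ≤ ‖(fc d lam)^[k + 1] z‖
      rw [Function.iterate_succ_apply']
      exact norm_fc_ge d lam _) hC hside n hn
  simp only [Function.iterate_zero_apply] at hkey
  rw [csharp_iter]
  rw [div_le_iff₀ (by positivity)]
  have hdn : (0:ℝ) ≤ (d:ℝ)^n := by positivity
  calc (d:ℝ)^n * (∏ k ∈ range n, ‖(fc d lam)^[k] z‖ ^ (d - 1)) * (1 + ‖z‖^2)
      = (d:ℝ)^n * ((∏ k ∈ range n, ‖(fc d lam)^[k] z‖ ^ (d - 1)) * (1 + ‖z‖^2)) := by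
        ring
    _ ≤ (d:ℝ)^n * (C * (d:ℝ)^n * (1 + ‖(fc d lam)^[n] z‖^2)) :=
        mul_le_mul_of_nonneg_left hkey hdn
    _ = C * ((d:ℝ)^n * (d:ℝ)^n) * (1 + ‖(fc d lam)^[n] z‖^2) := by ring
    _ = C * (d:ℝ)^(2*n) * (1 + ‖(fc d lam)^[n] z‖^2) := by
        rw [show 2 * n = n + n by omega, pow_add]

lemma csharp_nonneg (h : ℂ → ℂ) (z : ℂ) : 0 ≤ csharp h z := by
  unfold csharp
  positivity

/-! ### chordal ratio facts -/

lemma chordInf_pos (z : ℂ) : 0 < chordInf z := by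
  unfold chordInf
  positivity

lemma chordInf_sq (z : ℂ) : chordInf z ^ 2 = 1 / (1 + ‖z‖ ^ 2) := by
  unfold chordInf
  rw [div_pow, one_pow, Real.sq_sqrt (by positivity)]

lemma ratio_sq (d : ℕ) (lam : ℂ) (z : ℂ) :
    (chordInf z ^ d / chordInf (fc d lam z)) ^ 2
      = (1 + ‖fc d lam z‖ ^ 2) / (1 + ‖z‖ ^ 2) ^ d := by
  have h1 : (0:ℝ) < 1 + ‖z‖ ^ 2 := by positivity
  have h2 : (0:ℝ) < 1 + ‖fc d lam z‖ ^ 2 := by positivity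
  have e1 : (chordInf z ^ d) ^ 2 = (chordInf z ^ 2) ^ d := by
    rw [← pow_mul, ← pow_mul, mul_comm]
  rw [div_pow, e1, chordInf_sq, chordInf_sq]
  rw [div_pow, one_pow]
  field_simp

lemma one_add_pow_le {x : ℝ} (hx : 0 ≤ x) : ∀ d : ℕ, 1 ≤ d → 1 + x ^ d ≤ (1 + x) ^ d := by
  intro d
  induction d with
  | zero => omega
  | succ k ih =>
      intro _
      rcases Nat.eq_zero_or_pos k with hk | hk
      · subst hk; simp
      · have h1 := ih hk
        have hxk : 0 ≤ x ^ k := pow_nonneg hx k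
        have hps : x ^ (k + 1) = x ^ k * x := pow_succ x k
        calc 1 + x ^ (k + 1) ≤ (1 + x ^ k) * (1 + x) := by nlinarith [mul_nonneg hxk hx]
          _ ≤ (1 + x) ^ k * (1 + x) := by
              apply mul_le_mul_of_nonneg_right h1 (by linarith)
          _ = (1 + x) ^ (k + 1) := by rw [pow_succ]

set_option maxHeartbeats 1000000 in
lemma ratio_bounds {d : ℕ} (hd : 1 < d) (lam : ℂ) (z : ℂ) :
    1 / (2 + 2 * ‖lam‖) ^ (d + 2) ≤ chordInf z ^ d / chordInf (fc d lam z) ∧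
      chordInf z ^ d / chordInf (fc d lam z) ≤ (2 + 2 * ‖lam‖) ^ (d + 2) := by
  set a := ‖z‖ with ha
  set b := ‖fc d lam z‖ with hb
  set L := ‖lam‖ with hL
  have hL0 : 0 ≤ L := norm_nonneg lam
  have ha0 : 0 ≤ a := norm_nonneg z
  have hb0 : 0 ≤ b := norm_nonneg _
  have hhi : b ≤ a ^ d + L := norm_fc_le d lam z
  have hlo : a ^ d - L ≤ b := norm_fc_ge d lam z
  set M := (2 + 2 * L) ^ (d + 2) with hM
  have h2L : (2:ℝ) ≤ 2 + 2 * L := by linarith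
  have hM2 : (2:ℝ) + 2 * L ≤ M := le_self_pow₀ (by linarith) (by omega)
  have hM1 : (1:ℝ) ≤ M := by linarith
  have hMsq : M ≤ M ^ 2 := le_self_pow₀ hM1 (by norm_num)
  have habd : (a ^ d) ^ 2 = (a ^ 2) ^ d := by
    rw [← pow_mul, ← pow_mul, mul_comm]
  have had0 : 0 ≤ a ^ d := pow_nonneg ha0 d
  -- S1
  have hS1 : 1 + b ^ 2 ≤ M ^ 2 * (1 + a ^ 2) ^ d := by
    have h1 : 1 + b ^ 2 ≤ (1 + a ^ d + L) ^ 2 := by nlinarith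
    have h2 : (1 + a ^ d + L) ≤ (1 + L) * (1 + a ^ d) := by nlinarith
    have h3 : (1 + a ^ d) ^ 2 ≤ 2 * (1 + (a ^ 2) ^ d) := by
      nlinarith [sq_nonneg (1 - a ^ d), habd]
    have h4 : 1 + (a ^ 2) ^ d ≤ (1 + a ^ 2) ^ d :=
      one_add_pow_le (by positivity) d (by omega)
    have h5 : 2 * (1 + L) ^ 2 ≤ M ^ 2 := by nlinarith
    have h6 : (1 + a ^ d + L) ^ 2 ≤ ((1 + L) * (1 + a ^ d)) ^ 2 :=
      pow_le_pow_left₀ (by positivity) h2 2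
    have h7 : ((1 + L) * (1 + a ^ d)) ^ 2 = (1 + L) ^ 2 * (1 + a ^ d) ^ 2 := by ring
    have h8 : (1 + L) ^ 2 * (1 + a ^ d) ^ 2 ≤ (1 + L) ^ 2 * (2 * (1 + (a ^ 2) ^ d)) :=
      mul_le_mul_of_nonneg_left h3 (by positivity)
    have h9 : (1 + L) ^ 2 * (2 * (1 + (a ^ 2) ^ d)) ≤ (1 + L) ^ 2 * (2 * (1 + a ^ 2) ^ d) := by
      apply mul_le_mul_of_nonneg_left _ (by positivity)
      linarith
    have h10 : (1 + L) ^ 2 * (2 * (1 + a ^ 2) ^ d) = (2 * (1 + L) ^ 2) * (1 + a ^ 2) ^ d := by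
      ring
    have h11 : (2 * (1 + L) ^ 2) * (1 + a ^ 2) ^ d ≤ M ^ 2 * (1 + a ^ 2) ^ d :=
      mul_le_mul_of_nonneg_right h5 (by positivity)
    linarith
  -- S2
  have hS2 : (1 + a ^ 2) ^ d ≤ M ^ 2 * (1 + b ^ 2) := by
    rcases le_or_gt (a ^ 2) (1 + 2 * L) with hcase | hcase
    · have h1 : (1 + a ^ 2) ^ d ≤ (2 + 2 * L) ^ d :=
        pow_le_pow_left₀ (by positivity) (by linarith) d
      have h2 : (2 + 2 * L) ^ d ≤ (2 + 2 * L) ^ (2 * (d + 2)) :=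
        pow_le_pow_right₀ (by linarith) (by omega)
      have h3 : (2 + 2 * L) ^ (2 * (d + 2)) = M ^ 2 := by
        rw [hM, ← pow_mul]
        congr 1
        omega
      have h4 : M ^ 2 ≤ M ^ 2 * (1 + b ^ 2) :=
        le_mul_of_one_le_right (by positivity) (by nlinarith [sq_nonneg b])
      linarith
    · have ha1 : 1 < a := by nlinarith
      have had2 : a ^ 2 ≤ a ^ d := pow_le_pow_right₀ ha1.le hd
      have hL2 : 2 * L ≤ a ^ d := by nlinarith
      have hbad : a ^ d / 2 ≤ b := by linarith
      have hbsq : (a ^ 2) ^ d ≤ 4 * b ^ 2 := by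
        rw [← habd]
        nlinarith [had0]
      have h6 : (1 + a ^ 2) ^ d ≤ (2 * a ^ 2) ^ d :=
        pow_le_pow_left₀ (by positivity) (by nlinarith) d
      have h7 : (2 * a ^ 2) ^ d = 2 ^ d * (a ^ 2) ^ d := mul_pow 2 (a^2) d
      have h8 : (2:ℝ) ^ d * (a ^ 2) ^ d ≤ 2 ^ d * (4 * b ^ 2) :=
        mul_le_mul_of_nonneg_left hbsq (by positivity)
      have h9 : (2:ℝ) ^ d * (4 * b ^ 2) ≤ 2 ^ (d + 2) * (1 + b ^ 2) := by
        have : (2:ℝ) ^ (d + 2) = 2 ^ d * 4 := by rw [pow_add]; norm_num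
        rw [this]
        nlinarith [pow_pos (by norm_num : (0:ℝ) < 2) d]
      have h10 : (2:ℝ) ^ (d + 2) ≤ M ^ 2 := by
        have h11 : (2:ℝ) ^ (d + 2) ≤ (2 + 2 * L) ^ (d + 2) :=
          pow_le_pow_left₀ (by norm_num) h2L _
        have h13 : M ≤ M ^ 2 := hMsq
        linarith
      have h12 : (2:ℝ) ^ (d+2) * (1 + b ^ 2) ≤ M ^ 2 * (1 + b ^ 2) := by
        apply mul_le_mul_of_nonneg_right h10 (by positivity)
      linarith
  -- conclude
  have hrpos : 0 < chordInf z ^ d / chordInf (fc d lam z) :=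
    div_pos (pow_pos (chordInf_pos z) d) (chordInf_pos _)
  have hrsq : (chordInf z ^ d / chordInf (fc d lam z)) ^ 2 = (1 + b ^ 2) / (1 + a ^ 2) ^ d :=
    ratio_sq d lam z
  have hden : (0:ℝ) < (1 + a ^ 2) ^ d := by positivity
  constructor
  · apply le_of_pow_le_pow_left₀ (n := 2) (by norm_num) hrpos.le
    rw [hrsq, div_pow, one_pow]
    rw [div_le_div_iff₀ (by positivity) hden]
    calc 1 * (1 + a ^ 2) ^ d = (1 + a ^ 2) ^ d := by ring
      _ ≤ M ^ 2 * (1 + b ^ 2) := hS2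
      _ = (1 + b ^ 2) * (M ^ 2) := by ring
      _ = (1 + b ^ 2) * ((M) ^ 2) := by ring
  · apply le_of_pow_le_pow_left₀ (n := 2) (by norm_num) (by positivity)
    rw [hrsq]
    rw [div_le_iff₀ hden]
    calc 1 + b ^ 2 ≤ M ^ 2 * (1 + a ^ 2) ^ d := hS1
      _ = M ^ 2 * (1 + a ^ 2) ^ d := rfl

lemma abs_log_ratio_le {d : ℕ} (hd : 1 < d) (lam : ℂ) (z : ℂ) :
    |Real.log (chordInf z ^ d / chordInf (fc d lam z))|
      ≤ Real.log ((2 + 2 * ‖lam‖) ^ (d + 2)) := by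
  obtain ⟨hlow, hhigh⟩ := ratio_bounds hd lam z
  have hrpos : 0 < chordInf z ^ d / chordInf (fc d lam z) :=
    div_pos (pow_pos (chordInf_pos z) d) (chordInf_pos _)
  have hM1 : (1:ℝ) ≤ (2 + 2 * ‖lam‖) ^ (d + 2) :=
    one_le_pow₀ (by nlinarith [norm_nonneg lam])
  have hMpos : (0:ℝ) < (2 + 2 * ‖lam‖) ^ (d + 2) := by positivity
  rw [abs_le]
  constructor
  · have h1 : Real.log ((2 + 2 * ‖lam‖) ^ (d + 2))⁻¹ ≤ Real.log (chordInf z ^ d / chordInf (fc d lam z)) := by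
      apply Real.log_le_log (by positivity)
      rw [← one_div]
      exact hlow
    rw [Real.log_inv] at h1
    linarith
  · exact Real.log_le_log hrpos hhigh

lemma bdd_phi {d : ℕ} (hd : 1 < d) (lam : ℂ) :
    BddAbove (Set.range fun z : ℂ =>
      |Real.log (chordInf z ^ d / chordInf (fc d lam z))|) := by
  refine ⟨Real.log ((2 + 2 * ‖lam‖) ^ (d + 2)), ?_⟩
  rintro x ⟨z, rfl⟩
  exact abs_log_ratio_le hd lam z

/-! ### witnesses -/

lemma exists_root_pow (d : ℕ) (hd : 0 < d) (u : ℂ) (hu : u ≠ 0) : ∃ w : ℂ, w ^ d = u := by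
  refine ⟨Complex.exp (Complex.log u / d), ?_⟩
  rw [← Complex.exp_nat_mul]
  rw [mul_div_cancel₀ _ (by exact_mod_cast Nat.pos_iff_ne_zero.mp hd : (d:ℂ) ≠ 0)]
  exact Complex.exp_log hu

lemma exists_unit (lam : ℂ) (hL2 : ‖lam‖ ≤ 2) : ∃ u : ℂ, ‖u‖ = 1 ∧ ‖u + lam‖ ≤ 1 := by
  by_cases h0 : lam = 0
  · exact ⟨1, by simp, by simp [h0]⟩
  · have hL0 : 0 < ‖lam‖ := norm_pos_iff.mpr h0
    refine ⟨-(‖lam‖ : ℂ)⁻¹ * lam, ?_, ?_⟩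
    · rw [norm_mul, norm_neg, norm_inv]
      rw [Complex.norm_real]
      rw [Real.norm_eq_abs, abs_of_pos hL0]
      exact inv_mul_cancel₀ (ne_of_gt hL0)
    · have he : -(‖lam‖ : ℂ)⁻¹ * lam + lam = lam * (1 - (‖lam‖ : ℂ)⁻¹) := by ring
      rw [he, norm_mul]
      have he2 : (1 : ℂ) - (‖lam‖ : ℂ)⁻¹ = ((1 - ‖lam‖⁻¹ : ℝ) : ℂ) := by push_cast; ring
      rw [he2, Complex.norm_real, Real.norm_eq_abs]
      have h3 : ‖lam‖ * |1 - ‖lam‖⁻¹| = |‖lam‖ - 1| := by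
        have e : ‖lam‖ * (1 - ‖lam‖⁻¹) = ‖lam‖ - 1 := by
          rw [mul_sub, mul_one, mul_inv_cancel₀ (ne_of_gt hL0)]
        rw [← e, abs_mul, abs_of_pos hL0]
      rw [h3]
      rw [abs_le]
      constructor <;> [linarith; linarith]

lemma witnessA {d : ℕ} (hd : 1 < d) (lam : ℂ) (hL2 : ‖lam‖ ≤ 2) :
    ∃ z : ℂ, ((d : ℝ) - 1) / 2 * Real.log 2
      ≤ |Real.log (chordInf z ^ d / chordInf (fc d lam z))| := by
  obtain ⟨u, hu1, hu2⟩ := exists_unit lam hL2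
  have hune : u ≠ 0 := by
    intro h
    rw [h] at hu1
    simp at hu1
  obtain ⟨w, hw⟩ := exists_root_pow d (by omega) u hune
  refine ⟨w, ?_⟩
  have hwn : ‖w‖ = 1 := by
    have hpow : ‖w‖ ^ d = 1 := by rw [← norm_pow, hw, hu1]
    by_contra hne
    rcases lt_or_gt_of_ne hne with hlt | hgt
    · have h := pow_lt_one₀ (norm_nonneg w) hlt (by omega : d ≠ 0)
      rw [hpow] at h
      exact lt_irrefl 1 h
    · have h := one_lt_pow₀ hgt (by omega : d ≠ 0)
      rw [hpow] at h
      exact lt_irrefl 1 h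
  have hfz : ‖fc d lam w‖ ≤ 1 := by
    have : fc d lam w = u + lam := by
      unfold fc
      rw [hw]
    rw [this]
    exact hu2
  have hrpos : 0 < chordInf w ^ d / chordInf (fc d lam w) :=
    div_pos (pow_pos (chordInf_pos w) d) (chordInf_pos _)
  have hsq : (chordInf w ^ d / chordInf (fc d lam w)) ^ 2
      = (1 + ‖fc d lam w‖ ^ 2) / 2 ^ d := by
    rw [ratio_sq, hwn]
    norm_num
  have hb1 : ‖fc d lam w‖ ^ 2 ≤ 1 := by
    nlinarith [norm_nonneg (fc d lam w)]
  have hval : (chordInf w ^ d / chordInf (fc d lam w)) ^ 2 ≤ 2 / 2 ^ d := by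
    rw [hsq]
    apply div_le_div₀ (by norm_num) (by linarith) (by positivity) le_rfl
  have hlog2 : 2 * Real.log (chordInf w ^ d / chordInf (fc d lam w))
      ≤ Real.log 2 - (d : ℝ) * Real.log 2 := by
    have h1 : Real.log ((chordInf w ^ d / chordInf (fc d lam w)) ^ 2)
        ≤ Real.log (2 / 2 ^ d) := Real.log_le_log (pow_pos hrpos 2) hval
    have h2 : Real.log (2 / 2 ^ d) = Real.log 2 - (d : ℝ) * Real.log 2 := by
      rw [Real.log_div (by norm_num) (by positivity), Real.log_pow]
    rw [Real.log_pow] at h1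
    push_cast at h1
    linarith
  have habs : -(Real.log (chordInf w ^ d / chordInf (fc d lam w)))
      ≤ |Real.log (chordInf w ^ d / chordInf (fc d lam w))| := neg_le_abs _
  linarith

lemma witnessB (lam : ℂ) (hlam0 : lam ≠ 0) :
    ∃ z : ℂ, Real.log (1 + ‖lam‖)
      ≤ |Real.log (chordInf z ^ 2 / chordInf (fc 2 lam z))| := by
  obtain ⟨w, hw⟩ := exists_root_pow 2 (by norm_num) (-lam) (neg_ne_zero.mpr hlam0)
  refine ⟨w, ?_⟩
  have hfz : fc 2 lam w = 0 := by
    unfold fc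
    rw [hw]
    ring
  have hwn : ‖w‖ ^ 2 = ‖lam‖ := by rw [← norm_pow, hw, norm_neg]
  have hch0 : chordInf (0 : ℂ) = 1 := by
    unfold chordInf
    simp
  have hr2 : chordInf w ^ 2 = 1 / (1 + ‖lam‖) := by rw [chordInf_sq, hwn]
  have hval : chordInf w ^ 2 / chordInf (fc 2 lam w) = 1 / (1 + ‖lam‖) := by
    rw [hfz, hch0, hr2, div_one]
  rw [hval]
  have hL0 : 0 < ‖lam‖ := norm_pos_iff.mpr hlam0
  rw [Real.log_div one_ne_zero (by positivity), Real.log_one]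
  rw [abs_of_nonpos (by nlinarith [Real.log_nonneg (by linarith : (1:ℝ) ≤ 1 + ‖lam‖)])]
  simp

lemma log_le_log' {x y : ℝ} (hx : 0 ≤ x) (hxy : x ≤ y) (hy : 1 ≤ y) :
    Real.log x ≤ Real.log y := by
  rcases eq_or_lt_of_le hx with h | h
  · rw [← h, Real.log_zero]
    exact Real.log_nonneg hy
  · exact Real.log_le_log h hxy

end St6

theorem statement6 (d : ℕ) (hd : 1 < d) (n : ℕ) (hn : 1 ≤ n) (lam : ℂ)
    (hlam : BddAbove (Set.range fun k : ℕ => ‖(fc d lam)^[k] 0‖)) :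
    Real.log (⨆ z : ℂ, csharp ((fc d lam)^[n]) z) ≤
      2 * n * Real.log d +
        (4 / ((d : ℝ) - 1)) * ⨆ z : ℂ, |Real.log (chordInf z ^ d / chordInf (fc d lam z))| := by
  classical
  have hLd : ‖lam‖ ^ (d - 1) ≤ (d : ℝ) := St6.lam_bound hd hlam
  have hd2 : (2 : ℝ) ≤ (d : ℝ) := by exact_mod_cast hd
  have hd1 : (0 : ℝ) < (d : ℝ) - 1 := by linarith
  have hL2 : ‖lam‖ ≤ 2 := by
    apply le_of_pow_le_pow_left₀ (n := d - 1) (by omega) (by norm_num)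
    calc ‖lam‖ ^ (d - 1) ≤ (d : ℝ) := hLd
      _ ≤ 2 ^ (d - 1) := by
          have h1 : d ≤ 2 ^ (d - 1) := by
            have h2 := Nat.lt_two_pow_self (n := d - 1)
            omega
          calc (d : ℝ) ≤ ((2 ^ (d - 1) : ℕ) : ℝ) := by exact_mod_cast h1
            _ = (2 : ℝ) ^ (d - 1) := by push_cast; ring
  have hbdd := St6.bdd_phi hd lam
  have hsup0 : 0 ≤ ⨆ z : ℂ, csharp ((fc d lam)^[n]) z :=
    Real.iSup_nonneg fun z => St6.csharp_nonneg _ z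
  by_cases hcase : 3 ≤ d ∨ ‖lam‖ ≤ 1
  · -- constant 4
    have hsup : (⨆ z : ℂ, csharp ((fc d lam)^[n]) z) ≤ 4 * (d : ℝ) ^ (2 * n) :=
      ciSup_le fun z => St6.csharp_le hd lam hLd le_rfl (by tauto) n hn z
    have hone : (1 : ℝ) ≤ 4 * (d : ℝ) ^ (2 * n) := by
      have h : (1 : ℝ) ≤ (d : ℝ) ^ (2 * n) := one_le_pow₀ (by linarith)
      linarith
    have h1 : Real.log (⨆ z : ℂ, csharp ((fc d lam)^[n]) z)
        ≤ Real.log (4 * (d : ℝ) ^ (2 * n)) := St6.log_le_log' hsup0 hsup hone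
    have h2 : Real.log (4 * (d : ℝ) ^ (2 * n)) = Real.log 4 + 2 * n * Real.log d := by
      rw [Real.log_mul (by norm_num) (by positivity), Real.log_pow]
      push_cast
      ring
    obtain ⟨z₁, hz₁⟩ := St6.witnessA hd lam hL2
    have hSz : ((d : ℝ) - 1) / 2 * Real.log 2
        ≤ ⨆ z : ℂ, |Real.log (chordInf z ^ d / chordInf (fc d lam z))| :=
      le_trans hz₁ (le_ciSup hbdd z₁)
    have hbud : Real.log 4 ≤ (4 / ((d : ℝ) - 1)) *
        ⨆ z : ℂ, |Real.log (chordInf z ^ d / chordInf (fc d lam z))| := by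
      have h4 : Real.log 4 = 2 * Real.log 2 := by
        rw [show (4 : ℝ) = 2 ^ 2 by norm_num, Real.log_pow]
        push_cast
        ring
      have hpos : (0 : ℝ) < 4 / ((d : ℝ) - 1) := by positivity
      have h5 := mul_le_mul_of_nonneg_left hSz hpos.le
      have h6 : 4 / ((d : ℝ) - 1) * (((d : ℝ) - 1) / 2 * Real.log 2) = 2 * Real.log 2 := by
        field_simp
        ring
      rw [h6] at h5
      linarith
    rw [h2] at h1
    refine le_trans h1 ?_
    rw [add_comm]
    exact add_le_add_right hbud _
  · -- d = 2 and 1 < ‖lam‖ : constant 5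
    push_neg at hcase
    obtain ⟨hd3, hL1⟩ := hcase
    have hdeq : d = 2 := by omega
    subst hdeq
    have hlam0 : lam ≠ 0 := by
      intro h
      rw [h] at hL1
      simp at hL1
      linarith
    have hsup : (⨆ z : ℂ, csharp ((fc 2 lam)^[n]) z) ≤ 5 * ((2 : ℕ) : ℝ) ^ (2 * n) :=
      ciSup_le fun z => St6.csharp_le (by norm_num) lam hLd (by norm_num)
        (Or.inr (Or.inr le_rfl)) n hn z
    have hone : (1 : ℝ) ≤ 5 * ((2 : ℕ) : ℝ) ^ (2 * n) := by
      have h : (1 : ℝ) ≤ ((2 : ℕ) : ℝ) ^ (2 * n) := one_le_pow₀ (by norm_num)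
      linarith
    have h1 : Real.log (⨆ z : ℂ, csharp ((fc 2 lam)^[n]) z)
        ≤ Real.log (5 * ((2 : ℕ) : ℝ) ^ (2 * n)) := St6.log_le_log' hsup0 hsup hone
    have h2 : Real.log (5 * ((2 : ℕ) : ℝ) ^ (2 * n))
        = Real.log 5 + 2 * n * Real.log ((2 : ℕ) : ℝ) := by
      rw [Real.log_mul (by norm_num) (by positivity), Real.log_pow]
      push_cast
      ring
    obtain ⟨z₂, hz₂⟩ := St6.witnessB lam hlam0
    have hSz : Real.log (1 + ‖lam‖)
        ≤ ⨆ z : ℂ, |Real.log (chordInf z ^ 2 / chordInf (fc 2 lam z))| :=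
      le_trans hz₂ (le_ciSup hbdd z₂)
    have hlog2 : Real.log 2 ≤ Real.log (1 + ‖lam‖) :=
      Real.log_le_log (by norm_num) (by linarith)
    have hbud : Real.log 5 ≤ (4 / (((2 : ℕ) : ℝ) - 1)) *
        ⨆ z : ℂ, |Real.log (chordInf z ^ 2 / chordInf (fc 2 lam z))| := by
      have c4 : (4 : ℝ) / (((2 : ℕ) : ℝ) - 1) = 4 := by norm_num
      rw [c4]
      have c1 : Real.log 5 ≤ 4 * Real.log 2 := by
        have c2 : (4 : ℝ) * Real.log 2 = Real.log 16 := by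
          rw [show (16 : ℝ) = 2 ^ 4 by norm_num, Real.log_pow]
          push_cast
          ring
        rw [c2]
        exact Real.log_le_log (by norm_num) (by norm_num)
      have hSz' : Real.log 2
          ≤ ⨆ z : ℂ, |Real.log (chordInf z ^ 2 / chordInf (fc 2 lam z))| :=
        le_trans hlog2 hSz
      nlinarith [mul_le_mul_of_nonneg_left hSz' (by norm_num : (0:ℝ) ≤ 4)]
    rw [h2] at h1
    refine le_trans h1 ?_
    rw [add_comm]
    exact add_le_add_right hbud _
end

section
/- For every integer n ≥ 1 and every λ ∈ ℂ, ∏_{z : Φ_n(λ,z)=0} (f_λ^n)′(z) = d^{n·ν(n)} · ((−1)^{ν(n)}·Φ_n(λ,0))^{n(d−1)}, where the product is over the roots of Φ_n(λ,·) counted with multiplicity. -/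
open Polynomial

noncomputable def nu (d n : ℕ) : ℤ :=
  ∑ m ∈ n.divisors, ArithmeticFunction.moebius (n / m) * (d : ℤ) ^ m

namespace Statement13Aux

noncomputable def pc (d : ℕ) (lam : ℂ) : Polynomial ℂ := X ^ d + C lam

noncomputable def pit (d : ℕ) (lam : ℂ) : ℕ → Polynomial ℂ
  | 0 => X
  | (i+1) => (pit d lam i).comp (pc d lam)

variable {d : ℕ} {lam : ℂ}

lemma pc_monic (hd : 0 < d) : (pc d lam).Monic :=
  monic_X_pow_add_C _ hd.ne'

lemma pc_natDegree (hd : 0 < d) : (pc d lam).natDegree = d := by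
  unfold pc
  exact natDegree_X_pow_add_C

lemma eval_pc (z : ℂ) : (pc d lam).eval z = fc d lam z := by simp [pc, fc]

lemma pit_eval : ∀ (i : ℕ) (z : ℂ), (pit d lam i).eval z = (fc d lam)^[i] z
  | 0, z => by simp [pit]
  | (i+1), z => by
    rw [show pit d lam (i+1) = (pit d lam i).comp (pc d lam) from rfl, eval_comp, eval_pc,
      pit_eval i, Function.iterate_succ_apply]

lemma pit_monic (hd : 0 < d) : ∀ i, (pit d lam i).Monic
  | 0 => monic_X
  | (i+1) => by
    refine (pit_monic hd i).comp (pc_monic hd) ?_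
    rw [pc_natDegree hd]; omega

lemma pit_natDegree (hd : 0 < d) : ∀ i, (pit d lam i).natDegree = d ^ i
  | 0 => by simp [pit]
  | (i+1) => by
    rw [show pit d lam (i+1) = (pit d lam i).comp (pc d lam) from rfl, natDegree_comp,
      pit_natDegree hd i, pc_natDegree hd, pow_succ]

lemma monic_pit_sub_C (hd : 0 < d) (i : ℕ) (t : ℂ) : (pit d lam i - C t).Monic := by
  rw [sub_eq_add_neg]
  refine (pit_monic hd i).add_of_left ?_
  rw [degree_eq_natDegree (pit_monic hd i).ne_zero, pit_natDegree hd]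
  calc degree (-C t) ≤ 0 := by rw [degree_neg]; exact degree_C_le
    _ < ((d ^ i : ℕ) : WithBot ℕ) := by exact_mod_cast pow_pos hd i

lemma monic_pit_sub_X (hd : 1 < d) {m : ℕ} (hm : m ≠ 0) : (pit d lam m - X).Monic := by
  have hd0 : 0 < d := by omega
  rw [sub_eq_add_neg]
  refine (pit_monic hd0 m).add_of_left ?_
  rw [degree_eq_natDegree (pit_monic hd0 m).ne_zero, pit_natDegree hd0, degree_neg, degree_X]
  exact_mod_cast Nat.one_lt_pow hm hd

lemma monic_eq_prod (p : Polynomial ℂ) (hp : p.Monic) :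
    p = (p.roots.map fun c => X - C c).prod :=
  (prod_multiset_X_sub_C_of_monic_of_roots_card_eq hp
    (splits_iff_card_roots.mp (IsAlgClosed.splits p))).symm

lemma eval_monic (p : Polynomial ℂ) (hp : p.Monic) (a : ℂ) :
    p.eval a = (p.roots.map fun c => a - c).prod := by
  conv_lhs => rw [monic_eq_prod p hp]
  rw [eval_multiset_prod, Multiset.map_map]
  simp

lemma card_roots_monic (p : Polynomial ℂ) (hp : p.Monic) : p.roots.card = p.natDegree :=
  splits_iff_card_roots.mp (IsAlgClosed.splits p)

lemma prod_swap (s t : Multiset ℂ) (f : ℂ → ℂ → ℂ) :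
    (s.map fun a => (t.map fun b => f a b).prod).prod
      = (t.map fun b => (s.map fun a => f a b).prod).prod := by
  induction s using Multiset.induction with
  | empty => simp
  | cons a s ih => simp [Multiset.prod_map_mul, ih]

lemma prod_swap_finset (s : Multiset ℂ) (F : Finset ℕ) (g : ℕ → ℂ → ℂ) :
    (s.map fun a => ∏ k ∈ F, g k a).prod = ∏ k ∈ F, (s.map (g k)).prod := by
  induction s using Multiset.induction with
  | empty => simp
  | cons a s ih => simp [Finset.prod_mul_distrib, ih]

lemma roots_comp (hd : 0 < d) (S : Polynomial ℂ) (hS : S.Monic) :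
    (S.comp (pc d lam)).roots = S.roots.bind fun c => (pc d lam - C c).roots := by
  conv_lhs => rw [monic_eq_prod S hS]
  rw [multiset_prod_comp, Multiset.map_map]
  have h1 : ((fun p : Polynomial ℂ => p.comp (pc d lam)) ∘ fun c => X - C c)
      = fun c => pc d lam - C c := by
    funext c; simp [sub_comp]
  rw [h1, roots_multiset_prod, Multiset.bind_map]
  · intro h0
    obtain ⟨c, _, hc⟩ := Multiset.mem_map.mp h0
    have : (pc d lam - C c).Monic := by
      have := monic_pit_sub_C (lam := lam) hd 1 c
      simpa [pit, X_comp] using this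
    exact this.ne_zero hc

lemma prod_roots_G (hd : 1 < d) (m : ℕ) (hm : m ≠ 0) :
    ∀ (i : ℕ) (t : ℂ),
      (((pit d lam i - C t).roots).map fun c => (fc d lam)^[m] c - c).prod
        = (fc d lam)^[m] t - t := by
  have hd0 : 0 < d := by omega
  intro i
  induction i with
  | zero =>
    intro t
    rw [show pit d lam 0 - C t = X - C t from rfl, roots_X_sub_C]
    simp
  | succ i ih =>
    intro t
    have hcomp : pit d lam (i+1) - C t = (pit d lam i - C t).comp (pc d lam) := by
      rw [show pit d lam (i+1) = (pit d lam i).comp (pc d lam) from rfl, sub_comp, C_comp]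
    rw [hcomp, roots_comp hd0 _ (monic_pit_sub_C hd0 i t), Multiset.map_bind, Multiset.prod_bind]
    have inner : ∀ c' : ℂ,
        (((pc d lam - C c').roots).map fun c => (fc d lam)^[m] c - c).prod
          = (fc d lam)^[m] c' - c' := by
      intro c'
      have hmon : (pc d lam - C c').Monic := by
        have := monic_pit_sub_C (lam := lam) hd0 1 c'
        simpa [pit, X_comp] using this
      have hmm : ∀ c ∈ (pc d lam - C c').roots,
          (fc d lam)^[m] c - c = (fc d lam)^[m-1] c' - c := by
        intro c hc
        have hroot : (pc d lam - C c').eval c = 0 :=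
          (Polynomial.mem_roots'.mp hc).2
        have hfc : fc d lam c = c' := by
          have h2 : (pc d lam).eval c - c' = 0 := by simpa using hroot
          rw [eval_pc] at h2
          exact sub_eq_zero.mp h2
        have : (fc d lam)^[m] c = (fc d lam)^[m-1] c' := by
          conv_lhs => rw [show m = (m-1)+1 by omega, Function.iterate_succ_apply, hfc]
        rw [this]
      rw [Multiset.map_congr rfl hmm, ← eval_monic _ hmon]
      rw [eval_sub, eval_C, eval_pc]
      have : fc d lam ((fc d lam)^[m-1] c') = (fc d lam)^[m] c' := by
        conv_rhs => rw [show m = (m-1)+1 by omega, Function.iterate_succ_apply']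
      rw [this]
    rw [Multiset.map_congr rfl fun c' _ => inner c']
    exact ih t

lemma key (hd : 1 < d)
    (Q : Polynomial ℂ) (hQ : Q.Monic)
    (Sp Sm : Finset ℕ) (hSp : ∀ m ∈ Sp, m ≠ 0) (hSm : ∀ m ∈ Sm, m ≠ 0)
    (hAB : (∏ m ∈ Sp, (pit d lam m - X)) = Q * ∏ m ∈ Sm, (pit d lam m - X))
    (heven : ∀ i : ℕ, Even (Q.natDegree * (d ^ i + 1)))
    (i : ℕ) :
    (Q.roots.map fun r => X - C ((fc d lam)^[i] r)).prod = Q := by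
  have hd0 : 0 < d := by omega
  set B : Polynomial ℂ := ∏ m ∈ Sm, (pit d lam m - X) with hB
  set A : Polynomial ℂ := ∏ m ∈ Sp, (pit d lam m - X) with hA
  set L : Polynomial ℂ := (Q.roots.map fun r => X - C ((fc d lam)^[i] r)).prod with hL
  have hBmonic : B.Monic := monic_prod_of_monic _ _ fun m hm => monic_pit_sub_X hd (hSm m hm)
  have hcardR : Q.roots.card = Q.natDegree := card_roots_monic Q hQ
  have key_t : ∀ t : ℂ, (L * B).eval t = (Q * B).eval t := by
    intro t
    set M := (pit d lam i - C t).roots with hM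
    have hMmonic := monic_pit_sub_C (lam := lam) hd0 i t
    have hcardM : M.card = d ^ i := by
      rw [hM, card_roots_monic _ hMmonic, natDegree_sub_C, pit_natDegree hd0]
    -- product of a finset-indexed product polynomial over M
    have hGen : ∀ (S : Finset ℕ), (∀ m ∈ S, m ≠ 0) →
        (M.map fun c => (∏ m ∈ S, (pit d lam m - X)).eval c).prod
          = (∏ m ∈ S, (pit d lam m - X)).eval t := by
      intro S hS
      have hev : ∀ c : ℂ, (∏ m ∈ S, (pit d lam m - X)).eval c
          = ∏ m ∈ S, ((fc d lam)^[m] c - c) := by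
        intro c
        rw [eval_prod]
        exact Finset.prod_congr rfl fun m _ => by rw [eval_sub, eval_X, pit_eval]
      calc (M.map fun c => (∏ m ∈ S, (pit d lam m - X)).eval c).prod
          = (M.map fun c => ∏ m ∈ S, ((fc d lam)^[m] c - c)).prod := by
            rw [Multiset.map_congr rfl fun c _ => hev c]
        _ = ∏ m ∈ S, (M.map fun c => (fc d lam)^[m] c - c).prod := prod_swap_finset M S _
        _ = ∏ m ∈ S, ((fc d lam)^[m] t - t) :=
            Finset.prod_congr rfl fun m hm => prod_roots_G hd m (hS m hm) i t
        _ = (∏ m ∈ S, (pit d lam m - X)).eval t := (hev t).symm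
    have hBprod : (M.map fun c => B.eval c).prod = B.eval t := hGen Sm hSm
    have hAprod : (M.map fun c => A.eval c).prod = A.eval t := hGen Sp hSp
    -- product of Q over M
    have hsign : ((-1 : ℂ)) ^ (Q.natDegree * (d ^ i + 1)) = 1 := (heven i).neg_one_pow
    have hQprod : (M.map fun c => Q.eval c).prod = L.eval t := by
      calc (M.map fun c => Q.eval c).prod
          = (M.map fun c => (Q.roots.map fun r => c - r).prod).prod := by
            rw [Multiset.map_congr rfl fun c _ => eval_monic Q hQ c]
        _ = (Q.roots.map fun r => (M.map fun c => c - r).prod).prod := prod_swap _ _ _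
        _ = (Q.roots.map fun r => (-1 : ℂ) ^ (d ^ i + 1) * (t - (fc d lam)^[i] r)).prod := by
            refine congrArg _ (Multiset.map_congr rfl fun r _ => ?_)
            have h1 : (M.map fun c => c - r).prod
                = (-1 : ℂ) ^ (d ^ i) * (M.map fun c => r - c).prod := by
              have : (M.map fun c => c - r) = (M.map fun c => r - c).map Neg.neg := by
                rw [Multiset.map_map]; exact Multiset.map_congr rfl fun c _ => by simp only [Function.comp_apply]; ring
              rw [this, Multiset.prod_map_neg, Multiset.card_map, hcardM]
            have h2 : (M.map fun c => r - c).prod = (fc d lam)^[i] r - t := by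
              rw [← eval_monic _ hMmonic, eval_sub, eval_C, pit_eval]
            rw [h1, h2, pow_succ]
            ring
        _ = ((-1 : ℂ) ^ (d ^ i + 1)) ^ Q.roots.card
              * (Q.roots.map fun r => t - (fc d lam)^[i] r).prod := by
            rw [Multiset.prod_map_mul]
            congr 1
            simp
        _ = (Q.roots.map fun r => t - (fc d lam)^[i] r).prod := by
            rw [hcardR, ← pow_mul, mul_comm (d ^ i + 1), hsign, one_mul]
        _ = L.eval t := by
            rw [hL, eval_multiset_prod, Multiset.map_map]
            refine congrArg _ (Multiset.map_congr rfl fun r _ => ?_)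
            simp
    calc (L * B).eval t = L.eval t * B.eval t := by rw [eval_mul]
      _ = (M.map fun c => Q.eval c).prod * (M.map fun c => B.eval c).prod := by
          rw [hQprod, hBprod]
      _ = (M.map fun c => A.eval c).prod := by
          rw [← Multiset.prod_map_mul]
          refine congrArg _ (Multiset.map_congr rfl fun c _ => ?_)
          rw [hAB, eval_mul]
      _ = A.eval t := hAprod
      _ = (Q * B).eval t := by rw [hAB]
  have hLB : L * B = Q * B := Polynomial.funext key_t
  exact mul_right_cancel₀ hBmonic.ne_zero hLB

lemma derivative_pit (hd : 1 < d) :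
    ∀ n, (pit d lam n).derivative
      = ∏ k ∈ Finset.range n, (C (d : ℂ) * (pit d lam k) ^ (d - 1))
  | 0 => by simp [pit]
  | (i+1) => by
    have hpc : (pc d lam).derivative = C (d : ℂ) * X ^ (d - 1) := by
      simp [pc, derivative_X_pow]
    rw [show pit d lam (i+1) = (pit d lam i).comp (pc d lam) from rfl, derivative_comp,
      derivative_pit hd i, hpc, Polynomial.prod_comp, Finset.prod_range_succ']
    have hcomp : ∀ k, (C (d : ℂ) * (pit d lam k) ^ (d - 1)).comp (pc d lam)
        = C (d : ℂ) * (pit d lam (k+1)) ^ (d - 1) := by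
      intro k
      rw [mul_comp, C_comp, pow_comp]
      rfl
    rw [Finset.prod_congr rfl fun k _ => hcomp k, show pit d lam 0 = X from rfl]
    ring

lemma deriv_iterate (n : ℕ) (z : ℂ) :
    deriv ((fc d lam)^[n]) z = ((pit d lam n).derivative).eval z := by
  have h : (fc d lam)^[n] = fun w => (pit d lam n).eval w :=
    funext fun w => (pit_eval n w).symm
  rw [h]
  exact Polynomial.deriv (p := pit d lam n)

end Statement13Aux

open Statement13Aux in
theorem statement13 (d : ℕ) (hd : 1 < d) (n : ℕ) (hn : 1 ≤ n)
    (Φ : Polynomial (Polynomial ℂ))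
    (hΦprod : ∀ lam z : ℂ,
      (∏ m ∈ n.divisors.filter fun m => ArithmeticFunction.moebius (n / m) = 1,
          ((fc d lam)^[m] z - z)) =
        (Φ.map (evalRingHom lam)).eval z *
          ∏ m ∈ n.divisors.filter fun m => ArithmeticFunction.moebius (n / m) = -1,
            ((fc d lam)^[m] z - z))
    (hΦmonic : ∀ lam : ℂ, (Φ.map (evalRingHom lam)).Monic)
    (hΦdeg : ∀ lam : ℂ, ((Φ.map (evalRingHom lam)).natDegree : ℤ) = nu d n) :
    ∀ lam : ℂ,
      (((Φ.map (evalRingHom lam)).roots).map (fun z => deriv ((fc d lam)^[n]) z)).prod =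
        (d : ℂ) ^ ((n : ℤ) * nu d n) *
          ((-1 : ℂ) ^ (nu d n) * (Φ.map (evalRingHom lam)).eval 0) ^ (n * (d - 1)) := by
  intro lam
  have hd0 : 0 < d := by omega
  set Q : Polynomial ℂ := Φ.map (evalRingHom lam) with hQdef
  have hQ : Q.Monic := hΦmonic lam
  set ν : ℕ := Q.natDegree with hν
  have hcardR : Q.roots.card = ν := card_roots_monic Q hQ
  -- d divides ν
  have hdvd : d ∣ ν := by
    have h1 : (d : ℤ) ∣ nu d n := by
      refine Finset.dvd_sum fun m hm => ?_
      exact dvd_mul_of_dvd_right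
        (dvd_pow_self (d : ℤ) (Nat.pos_of_mem_divisors hm).ne') _
    rw [← hΦdeg lam] at h1
    exact_mod_cast h1
  have heven : ∀ i : ℕ, Even (ν * (d ^ i + 1)) := by
    intro i
    rcases Nat.even_or_odd d with he | ho
    · have hν2 : Even ν := by
        rcases hdvd with ⟨k, hk⟩
        exact hk ▸ he.mul_right k
      exact hν2.mul_right _
    · exact (Odd.add_one (ho.pow)).mul_left ν
  -- polynomial identity A = Q * B
  set Sp : Finset ℕ := n.divisors.filter fun m => ArithmeticFunction.moebius (n / m) = 1
    with hSpdef
  set Sm : Finset ℕ := n.divisors.filter fun m => ArithmeticFunction.moebius (n / m) = -1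
    with hSmdef
  have hSp : ∀ m ∈ Sp, m ≠ 0 := fun m hm =>
    (Nat.pos_of_mem_divisors (Finset.mem_filter.mp hm).1).ne'
  have hSm : ∀ m ∈ Sm, m ≠ 0 := fun m hm =>
    (Nat.pos_of_mem_divisors (Finset.mem_filter.mp hm).1).ne'
  have hAB : (∏ m ∈ Sp, (pit d lam m - X)) = Q * ∏ m ∈ Sm, (pit d lam m - X) := by
    apply Polynomial.funext
    intro z
    simp only [eval_prod, eval_mul, eval_sub, eval_X, pit_eval]
    exact hΦprod lam z
  have hkey := key hd Q hQ Sp Sm hSp hSm hAB heven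
  -- the iterated products over roots are all equal to (-1)^ν * Q.eval 0
  have hti : ∀ i : ℕ, (Q.roots.map fun r => (fc d lam)^[i] r).prod
      = (-1 : ℂ) ^ ν * Q.eval 0 := by
    intro i
    have h0 := congrArg (fun p => Polynomial.eval 0 p) (hkey i)
    simp only [eval_multiset_prod, Multiset.map_map] at h0
    have h1 : (Q.roots.map fun r => Polynomial.eval 0 (X - C ((fc d lam)^[i] r))).prod
        = (-1 : ℂ) ^ ν * (Q.roots.map fun r => (fc d lam)^[i] r).prod := by
      have hmm : (Q.roots.map fun r => Polynomial.eval 0 (X - C ((fc d lam)^[i] r)))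
          = (Q.roots.map fun r => (fc d lam)^[i] r).map Neg.neg := by
        rw [Multiset.map_map]
        refine Multiset.map_congr rfl fun r _ => ?_
        simp
      rw [hmm, Multiset.prod_map_neg, Multiset.card_map, hcardR]
    rw [show ((Q.roots.map fun r => Polynomial.eval 0 (X - C ((fc d lam)^[i] r))).prod
        = Q.eval 0) from by simpa using h0] at h1
    have hsq : ((-1 : ℂ) ^ ν) * ((-1 : ℂ) ^ ν) = 1 := by
      rw [← pow_add]
      exact Even.neg_one_pow ⟨ν, rfl⟩
    calc (Q.roots.map fun r => (fc d lam)^[i] r).prod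
        = (((-1 : ℂ) ^ ν) * ((-1 : ℂ) ^ ν))
            * (Q.roots.map fun r => (fc d lam)^[i] r).prod := by rw [hsq, one_mul]
      _ = (-1 : ℂ) ^ ν * Q.eval 0 := by rw [mul_assoc, ← h1]
  -- main computation
  have hderiv : ∀ z : ℂ, deriv ((fc d lam)^[n]) z
      = ∏ k ∈ Finset.range n, ((d : ℂ) * ((fc d lam)^[k] z) ^ (d - 1)) := by
    intro z
    rw [deriv_iterate, derivative_pit hd, eval_prod]
    exact Finset.prod_congr rfl fun k _ => by rw [eval_mul, eval_C, eval_pow, pit_eval]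
  set c0 : ℂ := (-1 : ℂ) ^ ν * Q.eval 0 with hc0
  have hLHS : ((Q.roots).map (fun z => deriv ((fc d lam)^[n]) z)).prod
      = ((d : ℂ) ^ ν * c0 ^ (d - 1)) ^ n := by
    calc ((Q.roots).map (fun z => deriv ((fc d lam)^[n]) z)).prod
        = ((Q.roots).map (fun z =>
            ∏ k ∈ Finset.range n, ((d : ℂ) * ((fc d lam)^[k] z) ^ (d - 1)))).prod := by
          rw [Multiset.map_congr rfl fun z _ => hderiv z]
      _ = ∏ k ∈ Finset.range n,
            ((Q.roots).map (fun z => (d : ℂ) * ((fc d lam)^[k] z) ^ (d - 1))).prod :=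
          prod_swap_finset _ _ _
      _ = ∏ k ∈ Finset.range n, ((d : ℂ) ^ ν * c0 ^ (d - 1)) := by
          refine Finset.prod_congr rfl fun k _ => ?_
          have : ((Q.roots).map (fun z => (d : ℂ) * ((fc d lam)^[k] z) ^ (d - 1))).prod
              = ((Q.roots).map (fun _ => (d : ℂ))).prod
                * ((Q.roots).map (fun z => ((fc d lam)^[k] z) ^ (d - 1))).prod :=
            Multiset.prod_map_mul
          rw [this]
          congr 1
          · rw [Multiset.map_const', Multiset.prod_replicate, hcardR]
          · rw [Multiset.prod_map_pow, hti k]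
      _ = ((d : ℂ) ^ ν * c0 ^ (d - 1)) ^ n := by
          rw [Finset.prod_const, Finset.card_range]
  rw [hLHS]
  have hnu : nu d n = (ν : ℤ) := (hΦdeg lam).symm
  rw [hnu]
  rw [show ((n : ℤ) * (ν : ℤ)) = ((n * ν : ℕ) : ℤ) by push_cast; ring]
  rw [zpow_natCast, zpow_natCast]
  rw [← hc0]
  rw [mul_pow, ← pow_mul, ← pow_mul]
  congr 1
  · rw [mul_comm]
  · rw [Nat.mul_comm]
end

section
/- For every integer n ≥ 1 and every λ₀ ∈ ℂ with Φ_n(λ₀,0) = 0, one has f_{λ₀}^n(0) = 0 and f_{λ₀}^m(0) ≠ 0 for every integer 1 ≤ m < n (so that 0 is a periodic point of f_{λ₀} of exact period n), and λ₀ is a simple zero of the polynomial λ ↦ Φ_n(λ,0). -/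
open Polynomial

noncomputable def Fz (d : ℕ) (lam : ℂ) : ℕ → Polynomial ℂ
  | 0 => X
  | (m+1) => (Fz d lam m) ^ d + C lam

noncomputable def gI (d : ℕ) : ℕ → Polynomial ℤ
  | 0 => 0
  | (m+1) => (gI d m) ^ d + X

lemma Fz_eval (d : ℕ) (lam z : ℂ) : ∀ m, (Fz d lam m).eval z = (fc d lam)^[m] z
  | 0 => by simp [Fz]
  | (m+1) => by
      rw [Function.iterate_succ_apply']
      simp [Fz, Fz_eval d lam z m, fc]

lemma gC_eval (d : ℕ) (lam : ℂ) :
    ∀ m, ((gI d m).map (Int.castRingHom ℂ)).eval lam = (fc d lam)^[m] 0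
  | 0 => by simp [gI]
  | (m+1) => by
      rw [Function.iterate_succ_apply']
      simp [gI, Polynomial.map_add, Polynomial.map_pow, gC_eval d lam m, fc]

lemma Fz_natDegree (d : ℕ) (hd : 1 < d) (lam : ℂ) : ∀ m, (Fz d lam m).natDegree = d ^ m
  | 0 => by simp [Fz]
  | (m+1) => by
      have h1 : ((Fz d lam m) ^ d).natDegree = d ^ (m + 1) := by
        rw [natDegree_pow, Fz_natDegree d hd lam m]; ring
      rw [Fz, natDegree_add_C, h1]

lemma Fz_sub_X_ne (d : ℕ) (hd : 1 < d) (lam : ℂ) {m : ℕ} (hm : 1 ≤ m) :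
    Fz d lam m - X ≠ 0 := by
  intro h
  have h2 : Fz d lam m = X := by linear_combination (norm := ring_nf) h
  have := Fz_natDegree d hd lam m
  rw [h2, natDegree_X] at this
  have : 1 < d ^ m := Nat.one_lt_pow (by omega) hd
  omega

lemma Fz_deriv (d : ℕ) (hd : 1 < d) (lam : ℂ) :
    ∀ m, (derivative (Fz d lam m)).eval 0 = 0 ∨ m = 0
  | 0 => Or.inr rfl
  | (m+1) => by
      left
      rw [Fz, derivative_add, derivative_C, derivative_pow]
      rcases Fz_deriv d hd lam m with h | h
      · simp [h]
      · subst h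
        simp only [Fz, derivative_X, mul_one, add_zero, eval_mul, eval_pow, eval_C, eval_X]
        rw [zero_pow (by omega)]
        ring

lemma rootMult_eq_one {p : Polynomial ℂ} {a : ℂ} (h0 : p ≠ 0) (hr : p.eval a = 0)
    (hd : (derivative p).eval a ≠ 0) : rootMultiplicity a p = 1 := by
  have h1 : 0 < rootMultiplicity a p := (rootMultiplicity_pos h0).mpr hr
  have h2 : ¬ 1 < rootMultiplicity a p := by
    rw [lt_rootMultiplicity_iff_isRoot_iterate_derivative h0]
    push_neg
    exact ⟨1, le_refl 1, by simpa [IsRoot] using hd⟩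
  omega

lemma rootMult_prod (s : Finset ℕ) (F : ℕ → Polynomial ℂ) (h : ∀ m ∈ s, F m ≠ 0) (a : ℂ) :
    rootMultiplicity a (∏ m ∈ s, F m) = ∑ m ∈ s, rootMultiplicity a (F m) := by
  induction s using Finset.cons_induction with
  | empty => simp [rootMultiplicity_eq_zero (by simp [IsRoot] : ¬ (1 : ℂ[X]).IsRoot a)]
  | cons m s hm ih =>
    rw [Finset.prod_cons, Finset.sum_cons, rootMultiplicity_mul,
      ih (fun k hk => h k (Finset.mem_cons_of_mem hk))]
    exact mul_ne_zero (h m (Finset.mem_cons_self m s))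
      (Finset.prod_ne_zero_iff.mpr (fun k hk => h k (Finset.mem_cons_of_mem hk)))

lemma gI_monic (d : ℕ) (hd : 1 < d) : ∀ m, 1 ≤ m → Monic (gI d m) ∧ (gI d m).natDegree = d ^ (m - 1)
  | 1, _ => by
      constructor
      · show Monic ((0:Polynomial ℤ) ^ d + X)
        rw [zero_pow (by omega), zero_add]; exact monic_X
      · show ((0:Polynomial ℤ) ^ d + X).natDegree = d ^ 0
        rw [zero_pow (by omega), zero_add, natDegree_X, pow_zero]
  | (m+2), _ => by
      obtain ⟨hmon, hdeg⟩ := gI_monic d hd (m+1) (by omega)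
      have hpm : Monic ((gI d (m+1)) ^ d) := hmon.pow d
      have hpd : ((gI d (m+1)) ^ d).natDegree = d ^ (m + 1) := by
        rw [natDegree_pow, hdeg]
        simp only [Nat.add_sub_cancel]
        rw [← pow_succ']
      have hlt : degree (X : Polynomial ℤ) < degree ((gI d (m+1)) ^ d) := by
        rw [degree_X, degree_eq_natDegree hpm.ne_zero, hpd]
        exact_mod_cast Nat.one_lt_pow (by omega) hd
      constructor
      · show Monic ((gI d (m+1)) ^ d + X)
        exact hpm.add_of_left hlt
      · show ((gI d (m+1)) ^ d + X).natDegree = d ^ (m + 1)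
        rw [natDegree_add_eq_left_of_degree_lt hlt, hpd]

lemma gI_deriv (d : ℕ) {m : ℕ} (hm : 1 ≤ m) :
    ∃ h : Polynomial ℤ, derivative (gI d m) = 1 + C (d : ℤ) * h := by
  obtain ⟨k, rfl⟩ : ∃ k, m = k + 1 := ⟨m - 1, by omega⟩
  refine ⟨(gI d k) ^ (d - 1) * derivative (gI d k), ?_⟩
  show derivative ((gI d k) ^ d + X) = _
  rw [derivative_add, derivative_X, derivative_pow]
  ring

lemma moebius_filter_sum {n m₀ : ℕ} (hn : 0 < n) (hm₀ : 0 < m₀) (hdvd : m₀ ∣ n) :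
    ∑ m ∈ n.divisors.filter (fun m => m₀ ∣ m), (ArithmeticFunction.moebius (n / m) : ℤ)
      = if n = m₀ then 1 else 0 := by
  obtain ⟨t, rfl⟩ := hdvd
  have ht : 0 < t := Nat.pos_of_ne_zero (by rintro rfl; simp at hn)
  have key : ∑ m ∈ (m₀ * t).divisors.filter (fun m => m₀ ∣ m),
      (ArithmeticFunction.moebius ((m₀ * t) / m) : ℤ)
      = ∑ k ∈ t.divisors, (ArithmeticFunction.moebius (t / k) : ℤ) := by
    refine Finset.sum_nbij' (fun m => m / m₀) (fun k => m₀ * k) ?_ ?_ ?_ ?_ ?_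
    · intro m hm
      simp only [Finset.mem_filter, Nat.mem_divisors] at hm
      obtain ⟨⟨hmd, hne⟩, k, rfl⟩ := hm
      rw [Nat.mul_div_cancel_left _ hm₀, Nat.mem_divisors]
      exact ⟨(Nat.mul_dvd_mul_iff_left hm₀).mp hmd, by omega⟩
    · intro k hk
      rw [Nat.mem_divisors] at hk
      simp only [Finset.mem_filter, Nat.mem_divisors]
      exact ⟨⟨Nat.mul_dvd_mul_left m₀ hk.1, by positivity⟩, Dvd.intro k rfl⟩
    · intro m hm
      simp only [Finset.mem_filter, Nat.mem_divisors] at hm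
      exact Nat.mul_div_cancel' hm.2
    · intro k _
      exact Nat.mul_div_cancel_left _ hm₀
    · intro m hm
      simp only [Finset.mem_filter, Nat.mem_divisors] at hm
      obtain ⟨⟨hmd, hne⟩, k, rfl⟩ := hm
      rw [Nat.mul_div_cancel_left _ hm₀, Nat.mul_div_mul_left _ _ hm₀]
  rw [key]
  have h2 : ∑ k ∈ t.divisors, (ArithmeticFunction.moebius (t / k) : ℤ)
      = ∑ k ∈ t.divisors, (ArithmeticFunction.moebius k : ℤ) := Nat.sum_div_divisors t _
  rw [h2]
  have h3 : ∑ k ∈ t.divisors, (ArithmeticFunction.moebius k : ℤ)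
      = (ArithmeticFunction.moebius * ArithmeticFunction.zeta : ArithmeticFunction ℤ) t := by
    rw [ArithmeticFunction.coe_mul_zeta_apply]
  rw [h3, ArithmeticFunction.moebius_mul_coe_zeta, ArithmeticFunction.one_apply]
  have h4 : m₀ * t = m₀ ↔ t = 1 := by
    constructor
    · intro h
      have h6 : m₀ * t = m₀ * 1 := by omega
      exact Nat.eq_of_mul_eq_mul_left hm₀ h6
    · rintro rfl; simp
  by_cases h5 : t = 1
  · simp [h5]
  · rw [if_neg h5, if_neg (by rw [h4]; exact h5)]

theorem statement15 (d : ℕ) (hd : 1 < d) (n : ℕ) (hn : 1 ≤ n)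
    (Φ : Polynomial (Polynomial ℂ))
    (hΦprod : ∀ lam z : ℂ,
      (∏ m ∈ n.divisors.filter fun m => ArithmeticFunction.moebius (n / m) = 1,
          ((fc d lam)^[m] z - z)) =
        (Φ.map (evalRingHom lam)).eval z *
          ∏ m ∈ n.divisors.filter fun m => ArithmeticFunction.moebius (n / m) = -1,
            ((fc d lam)^[m] z - z))
    (hΦmonic : ∀ lam : ℂ, (Φ.map (evalRingHom lam)).Monic)
    (hΦdeg : ∀ lam : ℂ, ((Φ.map (evalRingHom lam)).natDegree : ℤ) = nu d n)
    (lam₀ : ℂ) (hlam₀ : (Φ.coeff 0).eval lam₀ = 0) :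
    (fc d lam₀)^[n] 0 = 0 ∧
    (∀ m : ℕ, 1 ≤ m → m < n → (fc d lam₀)^[m] 0 ≠ 0) ∧
    Polynomial.rootMultiplicity lam₀ (Φ.coeff 0) = 1 := by
  classical
  have hn0 : n ≠ 0 := by omega
  set Sp := n.divisors.filter (fun m => ArithmeticFunction.moebius (n / m) = 1) with hSp
  set Sm := n.divisors.filter (fun m => ArithmeticFunction.moebius (n / m) = -1) with hSm
  -- Φ evaluated at lam₀
  have hΦ0 : (Φ.map (evalRingHom lam₀)).eval 0 = 0 := by
    rw [← coeff_zero_eq_eval_zero, coeff_map]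
    exact hlam₀
  -- Step A: f^[n] 0 = 0
  have hA := hΦprod lam₀ 0
  simp only [sub_zero] at hA
  rw [hΦ0, zero_mul] at hA
  obtain ⟨m₁, hm₁mem, hm₁⟩ := Finset.prod_eq_zero_iff.mp hA
  have hm₁div : m₁ ∣ n := Nat.dvd_of_mem_divisors (Finset.mem_of_mem_filter m₁ hm₁mem)
  have hper1 : Function.IsPeriodicPt (fc d lam₀) m₁ 0 := hm₁
  have hpern : Function.IsPeriodicPt (fc d lam₀) n 0 :=
    Function.isPeriodicPt_iff_minimalPeriod_dvd.mpr (hper1.minimalPeriod_dvd.trans hm₁div)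
  have conclusion1 : (fc d lam₀)^[n] 0 = 0 := hpern
  set m₀ := Function.minimalPeriod (fc d lam₀) 0 with hm₀def
  have hm₀pos : 0 < m₀ := hpern.minimalPeriod_pos (by omega)
  have hm₀dvd : m₀ ∣ n := hpern.minimalPeriod_dvd
  have hperiff : ∀ k : ℕ, (fc d lam₀)^[k] 0 = 0 ↔ m₀ ∣ k := by
    intro k
    rw [← Function.isPeriodicPt_iff_minimalPeriod_dvd]
    exact Iff.rfl
  -- Step B: z-polynomial identity and multiplicity count
  have hzid : (∏ m ∈ Sp, (Fz d lam₀ m - X)) =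
      Φ.map (evalRingHom lam₀) * ∏ m ∈ Sm, (Fz d lam₀ m - X) := by
    apply Polynomial.funext
    intro z
    simp only [eval_prod, eval_mul, eval_sub, eval_X, Fz_eval]
    exact hΦprod lam₀ z
  have hPhine : Φ.map (evalRingHom lam₀) ≠ 0 := (hΦmonic lam₀).ne_zero
  have hFne : ∀ m ∈ n.divisors, Fz d lam₀ m - X ≠ 0 := fun m hm =>
    Fz_sub_X_ne d hd lam₀ (Nat.pos_of_mem_divisors hm)
  have hr : ∀ m ∈ n.divisors,
      rootMultiplicity 0 (Fz d lam₀ m - X) = if m₀ ∣ m then 1 else 0 := by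
    intro m hm
    have heval : (Fz d lam₀ m - X).eval 0 = (fc d lam₀)^[m] 0 := by
      simp [Fz_eval]
    by_cases hdv : m₀ ∣ m
    · rw [if_pos hdv]
      apply rootMult_eq_one (hFne m hm)
      · rw [heval]; exact (hperiff m).mpr hdv
      · rw [derivative_sub, derivative_X, eval_sub, eval_one]
        rcases Fz_deriv d hd lam₀ m with h | h
        · rw [h]; norm_num
        · exfalso; have := Nat.pos_of_mem_divisors hm; omega
    · rw [if_neg hdv]
      apply rootMultiplicity_eq_zero
      rw [IsRoot, heval]
      exact fun h => hdv ((hperiff m).mp h)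
  have hprodneP : (∏ m ∈ Sp, (Fz d lam₀ m - X)) ≠ 0 :=
    Finset.prod_ne_zero_iff.mpr (fun m hm => hFne m (Finset.mem_of_mem_filter m hm))
  have hprodneM : (∏ m ∈ Sm, (Fz d lam₀ m - X)) ≠ 0 :=
    Finset.prod_ne_zero_iff.mpr (fun m hm => hFne m (Finset.mem_of_mem_filter m hm))
  have hcount : ∑ m ∈ Sp, rootMultiplicity 0 (Fz d lam₀ m - X)
      = rootMultiplicity 0 (Φ.map (evalRingHom lam₀))
        + ∑ m ∈ Sm, rootMultiplicity 0 (Fz d lam₀ m - X) := by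
    rw [← rootMult_prod Sp _ (fun m hm => hFne m (Finset.mem_of_mem_filter m hm)),
      ← rootMult_prod Sm _ (fun m hm => hFne m (Finset.mem_of_mem_filter m hm)),
      hzid, rootMultiplicity_mul (mul_ne_zero hPhine hprodneM)]
  have hK1 : 1 ≤ rootMultiplicity 0 (Φ.map (evalRingHom lam₀)) :=
    (rootMultiplicity_pos hPhine).mpr hΦ0
  -- the Möbius count
  have eP : (∑ m ∈ Sp, (rootMultiplicity 0 (Fz d lam₀ m - X) : ℤ))
      = ∑ m ∈ Sp, (if m₀ ∣ m then (1:ℤ) else 0) :=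
    Finset.sum_congr rfl (fun m hm => by
      rw [hr m (Finset.mem_of_mem_filter m hm)]; split_ifs <;> simp)
  have eM : (∑ m ∈ Sm, (rootMultiplicity 0 (Fz d lam₀ m - X) : ℤ))
      = ∑ m ∈ Sm, (if m₀ ∣ m then (1:ℤ) else 0) :=
    Finset.sum_congr rfl (fun m hm => by
      rw [hr m (Finset.mem_of_mem_filter m hm)]; split_ifs <;> simp)
  have hsum : ∑ m ∈ n.divisors.filter (fun m => m₀ ∣ m), (ArithmeticFunction.moebius (n / m) : ℤ)
      = (∑ m ∈ Sp, (rootMultiplicity 0 (Fz d lam₀ m - X) : ℤ))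
        - ∑ m ∈ Sm, (rootMultiplicity 0 (Fz d lam₀ m - X) : ℤ) := by
    rw [eP, eM, hSp, hSm, Finset.sum_filter, Finset.sum_filter, Finset.sum_filter,
      ← Finset.sum_sub_distrib]
    apply Finset.sum_congr rfl
    intro m hm
    have hμ : ArithmeticFunction.moebius (n / m) = 1 ∨ ArithmeticFunction.moebius (n / m) = -1
        ∨ ArithmeticFunction.moebius (n / m) = 0 := by
      by_cases h : ArithmeticFunction.moebius (n / m) = 0
      · right; right; exact h
      · rcases ArithmeticFunction.moebius_ne_zero_iff_eq_or.mp h with h1 | h1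
        · left; exact h1
        · right; left; exact h1
    by_cases hdv : m₀ ∣ m <;> rcases hμ with h1 | h1 | h1 <;> simp [hdv, h1]
  have hfilter := moebius_filter_sum (n := n) (m₀ := m₀) (by omega) hm₀pos hm₀dvd
  have hcastcount : (∑ m ∈ Sp, (rootMultiplicity 0 (Fz d lam₀ m - X) : ℤ))
      = (rootMultiplicity 0 (Φ.map (evalRingHom lam₀)) : ℤ)
        + ∑ m ∈ Sm, (rootMultiplicity 0 (Fz d lam₀ m - X) : ℤ) := by
    exact_mod_cast congrArg (Nat.cast : ℕ → ℤ) hcount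
  have hite : (if n = m₀ then (1:ℤ) else 0)
      = (rootMultiplicity 0 (Φ.map (evalRingHom lam₀)) : ℤ) := by
    rw [← hfilter, hsum]
    omega
  have hnm₀ : n = m₀ := by
    by_contra h
    rw [if_neg h] at hite
    have : (1:ℤ) ≤ (rootMultiplicity 0 (Φ.map (evalRingHom lam₀)) : ℤ) := by exact_mod_cast hK1
    omega
  have conclusion2 : ∀ m : ℕ, 1 ≤ m → m < n → (fc d lam₀)^[m] 0 ≠ 0 := by
    intro m h1 h2 h0
    have hdvm := (hperiff m).mp h0
    have := Nat.le_of_dvd (by omega) hdvm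
    omega
  refine ⟨conclusion1, conclusion2, ?_⟩
  -- Step C: simplicity in λ
  have hLid : (∏ m ∈ Sp, (gI d m).map (Int.castRingHom ℂ)) =
      Φ.coeff 0 * ∏ m ∈ Sm, (gI d m).map (Int.castRingHom ℂ) := by
    apply Polynomial.funext
    intro lam
    have h := hΦprod lam 0
    simp only [sub_zero] at h
    have hc : (Φ.map (evalRingHom lam)).eval 0 = (Φ.coeff 0).eval lam := by
      rw [← coeff_zero_eq_eval_zero, coeff_map]
      rfl
    simp only [eval_prod, eval_mul, gC_eval]
    rw [← hc]
    exact h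
  have hgCne : ∀ m ∈ n.divisors, (gI d m).map (Int.castRingHom ℂ) ≠ 0 := fun m hm =>
    (((gI_monic d hd m (Nat.pos_of_mem_divisors hm)).1).map _).ne_zero
  have hmultm : ∀ m ∈ n.divisors, m ≠ n →
      rootMultiplicity lam₀ ((gI d m).map (Int.castRingHom ℂ)) = 0 := by
    intro m hm hne
    apply rootMultiplicity_eq_zero
    rw [IsRoot, gC_eval]
    exact conclusion2 m (Nat.pos_of_mem_divisors hm)
      (Nat.lt_of_le_of_ne (Nat.le_of_dvd (by omega) (Nat.dvd_of_mem_divisors hm)) hne)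
  have hint : IsIntegral ℤ lam₀ := by
    refine ⟨gI d n, (gI_monic d hd n hn).1, ?_⟩
    rw [← eval_map, algebraMap_int_eq, gC_eval]
    exact conclusion1
  have hmultn : rootMultiplicity lam₀ ((gI d n).map (Int.castRingHom ℂ)) = 1 := by
    apply rootMult_eq_one (hgCne n (Nat.mem_divisors_self n hn0))
    · rw [gC_eval]; exact conclusion1
    · obtain ⟨h, hh⟩ := gI_deriv d hn
      intro habs
      rw [derivative_map, hh] at habs
      simp only [Polynomial.map_add, Polynomial.map_one, Polynomial.map_mul, map_C,
        eval_add, eval_one, eval_mul, eval_C, map_intCast] at habs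
      rw [show ((Int.castRingHom ℂ) ((d:ℕ):ℤ) : ℂ) = (d:ℂ) by simp] at habs
      set y : ℂ := ((h.map (Int.castRingHom ℂ)).eval lam₀) with hy
      have hyint : IsIntegral ℤ y := by
        have h7 : y = aeval lam₀ h := by
          rw [hy, aeval_def, ← eval_map, algebraMap_int_eq]
        rw [h7]
        have hle : Algebra.adjoin ℤ {lam₀} ≤ integralClosure ℤ ℂ :=
          Algebra.adjoin_le (Set.singleton_subset_iff.mpr hint)
        exact hle (aeval_mem_adjoin_singleton ℤ lam₀)
      have hdC : ((d:ℂ)) ≠ 0 := by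
        simp only [ne_eq, Nat.cast_eq_zero]; omega
      have hy' : y = -(1:ℂ)/(d:ℂ) := by
        field_simp
        linear_combination habs
      have hmap : algebraMap ℚ ℂ (-1/(d:ℚ)) = -(1:ℂ)/(d:ℂ) := by
        rw [eq_ratCast]
        push_cast
        ring
      have hintQ : IsIntegral ℤ ((-1/(d:ℚ)) : ℚ) := by
        rw [← isIntegral_algebraMap_iff (algebraMap ℚ ℂ).injective]
        rw [hmap, ← hy']
        exact hyint
      obtain ⟨z, hz⟩ := IsIntegrallyClosed.isIntegral_iff.mp hintQ
      rw [eq_intCast] at hz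
      have hdQ : ((d:ℚ)) ≠ 0 := by
        simp only [ne_eq, Nat.cast_eq_zero]; omega
      have hzq : (z:ℚ) * (d:ℚ) = -1 := by
        rw [hz]; field_simp
      have hzd : z * (d:ℤ) = -1 := by exact_mod_cast hzq
      have hdvd1 : (d:ℤ) ∣ 1 := ⟨-z, by linarith⟩
      have := Int.le_of_dvd one_pos hdvd1
      have : d ≤ 1 := by exact_mod_cast this
      omega
  have hprodPne : (∏ m ∈ Sp, (gI d m).map (Int.castRingHom ℂ)) ≠ 0 :=
    Finset.prod_ne_zero_iff.mpr (fun m hm => hgCne m (Finset.mem_of_mem_filter m hm))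
  have hprodMne : (∏ m ∈ Sm, (gI d m).map (Int.castRingHom ℂ)) ≠ 0 :=
    Finset.prod_ne_zero_iff.mpr (fun m hm => hgCne m (Finset.mem_of_mem_filter m hm))
  have hc0ne : Φ.coeff 0 ≠ 0 := by
    intro h
    rw [h, zero_mul] at hLid
    exact hprodPne hLid
  have hfin := congrArg (rootMultiplicity lam₀) hLid
  rw [rootMult_prod Sp _ (fun m hm => hgCne m (Finset.mem_of_mem_filter m hm)),
    rootMultiplicity_mul (mul_ne_zero hc0ne hprodMne),
    rootMult_prod Sm _ (fun m hm => hgCne m (Finset.mem_of_mem_filter m hm))] at hfin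
  have hnmem : n ∈ Sp := by
    rw [hSp]
    refine Finset.mem_filter.mpr ⟨Nat.mem_divisors_self n hn0, ?_⟩
    rw [Nat.div_self (by omega : 0 < n)]
    exact ArithmeticFunction.moebius_apply_one
  have hsplus : ∑ m ∈ Sp, rootMultiplicity lam₀ ((gI d m).map (Int.castRingHom ℂ)) = 1 := by
    rw [Finset.sum_eq_single n]
    · exact hmultn
    · intro m hm hne
      exact hmultm m (Finset.mem_of_mem_filter m hm) hne
    · intro habs; exact absurd hnmem habs
  have hsminus : ∑ m ∈ Sm, rootMultiplicity lam₀ ((gI d m).map (Int.castRingHom ℂ)) = 0 := by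
    apply Finset.sum_eq_zero
    intro m hm
    have h2 := Finset.mem_filter.mp hm
    have hne : m ≠ n := by
      rintro rfl
      rw [Nat.div_self (by omega : 0 < m), ArithmeticFunction.moebius_apply_one] at h2
      omega
    exact hmultm m h2.1 hne
  rw [hsplus, hsminus, add_zero] at hfin
  exact hfin.symm
end
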